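/- arXiv:2009.07720 — 9 statements merged into one kernel-verified Lean document; each statement's English description precedes it below -/
import Mathlib

section
/- Let P be a fine (finitely generated, cancellative) commutative monoid, written additively, and let u : P → ℤ be a monoid homomorphism. Let I_u ⊆ P be the monoid ideal generated by u⁻¹(ℤ ∖ {0}), i.e. I_u = {s + p : s ∈ P, u(s) ≠ 0, p ∈ P}. Then the complement of the radical √I_u = {p ∈ P : ∃ n ≥ 1, n·p ∈ I_u} is exactly the union of all faces F of P on which u vanishes: P ∖ √I_u = ⋃ {F : F a face of P with u(F) = {0}}. -/
/-- Let `P` be a fine (finitely generated, cancellative) commutative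
monoid and `u : P → ℤ` a monoid homomorphism.  Let `Iu` be the monoid ideal generated by
`u⁻¹(ℤ ∖ {0})`.  Then the complement of the radical `√Iu` is the union of all faces of
`P` on which `u` vanishes. -/
theorem stmt0 (P : Type*) [AddCancelCommMonoid P] [AddMonoid.FG P] (u : P →+ ℤ)
    (Iu : Set P) (hIu : Iu = {x | ∃ s p : P, u s ≠ 0 ∧ x = s + p}) :
    {p : P | ∃ n : ℕ, 1 ≤ n ∧ n • p ∈ Iu}ᶜ =
      ⋃ F ∈ {F : AddSubmonoid P |
        (∀ p q : P, p + q ∈ F → p ∈ F ∧ q ∈ F) ∧ ∀ x ∈ F, u x = 0},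
        (F : Set P) := by
  subst hIu
  ext x
  simp only [Set.mem_compl_iff, Set.mem_setOf_eq, Set.mem_iUnion, exists_prop]
  constructor
  · intro hx
    refine ⟨{ carrier := {q : P | ∃ (n : ℕ) (r : P), q + r = n • x}
              zero_mem' := ⟨0, 0, by simp⟩
              add_mem' := ?_ }, ⟨?_, ?_⟩, ⟨1, 0, by simp⟩⟩
    · rintro a b ⟨n, r, hn⟩ ⟨m, s, hm⟩
      refine ⟨n + m, r + s, ?_⟩
      rw [add_smul, ← hn, ← hm]; abel
    · rintro p q ⟨n, r, h⟩
      exact ⟨⟨n, q + r, by rw [← h]; abel⟩, ⟨n, p + r, by rw [← h]; abel⟩⟩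
    · rintro y ⟨n, r, h⟩
      by_contra huy
      rcases n with _ | m
      · -- y + r = 0, so x = y + (r + x) lies in Iu, contradicting hx 1
        simp only [zero_smul] at h
        exact hx ⟨1, le_rfl, y, r + x, huy, by rw [one_smul, ← add_assoc, h, zero_add]⟩
      · exact hx ⟨m + 1, Nat.succ_le_succ (Nat.zero_le m), y, r, huy, h.symm⟩
  · rintro ⟨F, ⟨hface, hzero⟩, hxF⟩ ⟨n, hn, s, p, hus, heq⟩
    have hnF : n • x ∈ F := AddSubmonoid.nsmul_mem F hxF n
    rw [heq] at hnF
    exact hus (hzero s (hface s p hnF).1)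
end

section
/- Let Q and P₁, …, P_r be sharp toric monoids (fine, saturated, with only unit 0), and for each i let φᵢ : Pᵢ → Q ⊕ ℤ be a monoid homomorphism; set uᵢ = pr₂ ∘ φᵢ : Pᵢ → ℤ. Let I ⊆ Q be the monoid ideal generated by ⋃ᵢ { pr₁(φᵢ(m)) : m ∈ Pᵢ, uᵢ(m) < 0 }. Then for every monoid homomorphism x : Q → ℝ≥0 the following are equivalent: (a) the face F_x = {q ∈ Q : x(q) = 0} satisfies F_x ∩ I = ∅; (b) for every i there exists ε > 0 such that the function m ↦ x(pr₁(φᵢ(m))) + ε·uᵢ(m) is nonnegative on all of Pᵢ. -/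
open scoped NNReal

/-- A sharp toric monoid: finitely generated, cancellative (via the typeclass),
torsion-free, saturated, and with `0` the only unit. -/
def IsSharpToric (Q : Type*) [AddCancelCommMonoid Q] : Prop :=
  AddMonoid.FG Q ∧
  (∀ a b : Q, a + b = 0 → a = 0) ∧
  (∀ (a b : Q) (n : ℕ), 1 ≤ n → n • a = n • b → a = b) ∧
  (∀ (a b : Q) (n : ℕ), 1 ≤ n → (∃ c : Q, n • a = n • b + c) → ∃ d : Q, a = b + d)

/-- For sharp toric monoids `Q`, `P₁,…,P_r`, homomorphisms
`φᵢ : Pᵢ → Q ⊕ ℤ` with `uᵢ = pr₂ ∘ φᵢ`, and `I ⊆ Q` the monoid ideal generated by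
`⋃ᵢ {pr₁ (φᵢ m) | uᵢ m < 0}`, for every monoid homomorphism `x : Q → ℝ≥0` the face
`F_x = x⁻¹(0)` is disjoint from `I` iff for every `i` there is `ε > 0` with
`x (pr₁ (φᵢ m)) + ε · uᵢ m ≥ 0` for all `m ∈ Pᵢ`. -/
theorem stmt1 (Q : Type*) [AddCancelCommMonoid Q] (hQ : IsSharpToric Q)
    (r : ℕ) (P : Fin r → Type*) [∀ i, AddCancelCommMonoid (P i)]
    (hP : ∀ i, IsSharpToric (P i))
    (φ : ∀ i, P i →+ Q × ℤ)
    (I : Set Q)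
    (hI : I = {x | ∃ (i : Fin r) (m : P i) (q : Q), (φ i m).2 < 0 ∧ x = (φ i m).1 + q})
    (x : Q →+ ℝ≥0) :
    {q : Q | x q = 0} ∩ I = ∅ ↔
      ∀ i : Fin r, ∃ ε : ℝ, 0 < ε ∧
        ∀ m : P i, 0 ≤ ((x (φ i m).1 : ℝ) + ε * ((φ i m).2 : ℝ)) := by
  classical
  subst hI
  constructor
  · intro h i
    -- key positivity fact
    have key : ∀ m : P i, (φ i m).2 < 0 → 0 < (x (φ i m).1 : ℝ) := by
      intro m hm
      have hne : x (φ i m).1 ≠ 0 := by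
        intro h0
        have hmem : (φ i m).1 ∈ {q : Q | x q = 0} ∩
            {x | ∃ (i : Fin r) (m : P i) (q : Q), (φ i m).2 < 0 ∧ x = (φ i m).1 + q} :=
          ⟨h0, ⟨i, m, 0, hm, by simp⟩⟩
        rw [h] at hmem
        exact hmem
      have h3 := (x (φ i m).1).coe_nonneg
      have hne2 : (x (φ i m).1 : ℝ) ≠ 0 := fun h0 => hne (by exact_mod_cast h0)
      exact lt_of_le_of_ne h3 (Ne.symm hne2)
    obtain ⟨S, hS⟩ := (hP i).1.fg_top
    set T : Finset (P i) := S.filter (fun g => (φ i g).2 < 0) with hT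
    set E : Finset ℝ := insert (1:ℝ)
      (T.image fun g => (x (φ i g).1 : ℝ) / (-((φ i g).2 : ℝ))) with hE
    have hEne : E.Nonempty := ⟨1, Finset.mem_insert_self _ _⟩
    set ε : ℝ := E.min' hEne with hεdef
    have hεpos : 0 < ε := by
      rw [hεdef, Finset.lt_min'_iff]
      intro b hb
      rcases Finset.mem_insert.mp hb with hb1 | hb2
      · simp [hb1]
      · obtain ⟨g, hg, rfl⟩ := Finset.mem_image.mp hb2
        have hgu : (φ i g).2 < 0 := (Finset.mem_filter.mp hg).2
        have hnum := key g hgu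
        have hden : (0:ℝ) < -((φ i g).2 : ℝ) := by
          have : ((φ i g).2 : ℝ) < 0 := by exact_mod_cast hgu
          linarith
        exact div_pos hnum hden
    set f : P i → ℝ := fun m => (x (φ i m).1 : ℝ) + ε * ((φ i m).2 : ℝ) with hf
    have hadd : ∀ a b, f (a + b) = f a + f b := by
      intro a b
      simp only [hf, map_add, Prod.fst_add, Prod.snd_add, NNReal.coe_add, Int.cast_add]
      ring
    have hzero : f 0 = 0 := by simp [hf]
    let N : AddSubmonoid (P i) :=
      { carrier := {m | 0 ≤ f m}
        add_mem' := fun {a b} ha hb => by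
          simp only [Set.mem_setOf_eq] at *
          rw [hadd]; linarith
        zero_mem' := by simp only [Set.mem_setOf_eq, hzero]; exact le_refl 0 }
    have hSN : (S : Set (P i)) ⊆ N := by
      intro g hg
      show 0 ≤ f g
      by_cases hu : (φ i g).2 < 0
      · have hmem : (x (φ i g).1 : ℝ) / (-((φ i g).2 : ℝ)) ∈ E :=
          Finset.mem_insert_of_mem (Finset.mem_image_of_mem _
            (Finset.mem_filter.mpr ⟨hg, hu⟩))
        have h1 : ε ≤ (x (φ i g).1 : ℝ) / (-((φ i g).2 : ℝ)) := Finset.min'_le _ _ hmem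
        have hden : (0:ℝ) < -((φ i g).2 : ℝ) := by
          have : ((φ i g).2 : ℝ) < 0 := by exact_mod_cast hu
          linarith
        rw [le_div_iff₀ hden] at h1
        simp only [hf]
        nlinarith
      · push_neg at hu
        have h2 : (0:ℝ) ≤ ((φ i g).2 : ℝ) := by exact_mod_cast hu
        have h3 : (0:ℝ) ≤ (x (φ i g).1 : ℝ) := (x (φ i g).1).coe_nonneg
        simp only [hf]
        nlinarith
    have hNtop : N = ⊤ := top_unique (hS ▸ AddSubmonoid.closure_le.mpr hSN)
    refine ⟨ε, hεpos, fun m => ?_⟩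
    have : m ∈ N := hNtop ▸ AddSubmonoid.mem_top m
    exact this
  · intro h
    ext q
    simp only [Set.mem_inter_iff, Set.mem_setOf_eq, Set.mem_empty_iff_false, iff_false,
      not_and]
    intro hx0
    rintro ⟨i, m, q', hu, rfl⟩
    rw [map_add] at hx0
    have hx1 : x (φ i m).1 = 0 := (add_eq_zero.mp hx0).1
    obtain ⟨ε, hε, hall⟩ := h i
    have := hall m
    rw [hx1] at this
    have hu' : ((φ i m).2 : ℝ) < 0 := by exact_mod_cast hu
    simp only [NNReal.coe_zero] at this
    nlinarith
end

section
/- Let P and Q be sharp toric monoids, φ : P → Q ⊕ ℤ a monoid homomorphism, u = pr₂ ∘ φ, and x : Q → ℝ≥0 a monoid homomorphism. Suppose that for every ε > 0 there exists m' ∈ P with x(pr₁(φ(m'))) + ε·u(m') < 0. Then there exists m ∈ P with u(m) < 0 and x(pr₁(φ(m))) = 0. -/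
open scoped NNReal

/-- For sharp toric monoids `P`, `Q`, `φ : P → Q ⊕ ℤ`, `u = pr₂ ∘ φ`
and `x : Q → ℝ≥0`: if for every `ε > 0` there is `m' ∈ P` with
`x (pr₁ (φ m')) + ε · u m' < 0`, then there is `m ∈ P` with `u m < 0` and
`x (pr₁ (φ m)) = 0`. -/
theorem stmt3 (P Q : Type*) [AddCancelCommMonoid P] [AddCancelCommMonoid Q]
    (hP : IsSharpToric P) (hQ : IsSharpToric Q)
    (φ : P →+ Q × ℤ) (x : Q →+ ℝ≥0)
    (h : ∀ ε : ℝ, 0 < ε → ∃ m' : P, ((x (φ m').1 : ℝ) + ε * ((φ m').2 : ℝ)) < 0) :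
    ∃ m : P, (φ m).2 < 0 ∧ x (φ m).1 = 0 := by
  by_contra hc
  push_neg at hc
  obtain ⟨T, hT⟩ := hP.1.fg_top
  -- for each generator with negative u, x is strictly positive
  set g : P → ℝ := fun t =>
    if (φ t).2 < 0 then (x (φ t).1 : ℝ) / (-((φ t).2 : ℝ)) else 1 with hg
  have hgpos : ∀ t : P, 0 < g t := by
    intro t
    by_cases hu : (φ t).2 < 0
    · have hx : (0 : ℝ) < (x (φ t).1 : ℝ) := by
        have := hc t hu
        exact_mod_cast zero_lt_iff.mpr this
      have hd : (0 : ℝ) < -((φ t).2 : ℝ) := by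
        have : ((φ t).2 : ℝ) < 0 := by exact_mod_cast hu
        linarith
      simp only [hg, if_pos hu]
      exact div_pos hx hd
    · simp [hg, if_neg hu]
  set F : Finset ℝ := insert (1 : ℝ) (T.image g) with hF
  have hFne : F.Nonempty := ⟨1, Finset.mem_insert_self _ _⟩
  set ε : ℝ := F.min' hFne with hε
  have hεpos : 0 < ε := by
    have hall : ∀ y ∈ F, (0:ℝ) < y := by
      intro y hy
      rcases Finset.mem_insert.1 hy with h1 | h2
      · rw [h1]; norm_num
      · obtain ⟨t, _, ht⟩ := Finset.mem_image.1 h2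
        rw [← ht]; exact hgpos t
    exact hall _ (F.min'_mem hFne)
  have hεle : ∀ t ∈ T, ε ≤ g t := fun t ht =>
    F.min'_le _ (Finset.mem_insert_of_mem (Finset.mem_image_of_mem g ht))
  obtain ⟨m', hm'⟩ := h ε hεpos
  -- find a generator violating the inequality
  have key : ∃ t ∈ T, ((x (φ t).1 : ℝ) + ε * ((φ t).2 : ℝ)) < 0 := by
    by_contra hall
    push_neg at hall
    have hmem : m' ∈ AddSubmonoid.closure (T : Set P) := by
      rw [hT]; exact AddSubmonoid.mem_top m'
    have : (0 : ℝ) ≤ (x (φ m').1 : ℝ) + ε * ((φ m').2 : ℝ) := by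
      refine AddSubmonoid.closure_induction (fun t ht => hall t ht) ?_ ?_ hmem
      · simp
      · intro a b _ _ ha hb
        have : (x (φ (a + b)).1 : ℝ) + ε * ((φ (a + b)).2 : ℝ)
            = ((x (φ a).1 : ℝ) + ε * ((φ a).2 : ℝ))
              + ((x (φ b).1 : ℝ) + ε * ((φ b).2 : ℝ)) := by
          simp only [map_add, Prod.fst_add, Prod.snd_add]
          push_cast
          ring
        rw [this]
        linarith
    linarith
  obtain ⟨t, htT, ht⟩ := key
  have hx0 : (0 : ℝ) ≤ (x (φ t).1 : ℝ) := (x (φ t).1).coe_nonneg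
  have huR : ((φ t).2 : ℝ) < 0 := by nlinarith
  have hu : (φ t).2 < 0 := by exact_mod_cast huR
  have hgle := hεle t htT
  rw [hg] at hgle
  simp only [if_pos hu] at hgle
  rw [le_div_iff₀ (by linarith : (0:ℝ) < -((φ t).2 : ℝ))] at hgle
  nlinarith
end

section
/- Let G be an abelian group, Q ⊆ G a submonoid, and ρ ∈ Q. Let Q₁₂ ⊆ G ⊕ ℤ be the submonoid generated by Q × {0}, the element (0, 1), and the element (ρ, −1). Then Q₁₂ = {(m, n) ∈ G ⊕ ℤ : (n ≥ 0 and m ∈ Q) or (n < 0 and m + n·ρ ∈ Q)}, where for n < 0, m + n·ρ means m − |n|·ρ computed in G. -/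
/-- Let `G` be an abelian group, `Q ⊆ G` a submonoid, `ρ ∈ Q`.  The
submonoid `Q₁₂` of `G ⊕ ℤ` generated by `Q × {0}`, `(0,1)` and `(ρ,-1)` is
`{(m,n) : (n ≥ 0 ∧ m ∈ Q) ∨ (n < 0 ∧ m + n•ρ ∈ Q)}`. -/
theorem stmt5 (G : Type*) [AddCommGroup G] (Q : AddSubmonoid G) (ρ : G) (hρ : ρ ∈ Q) :
    (AddSubmonoid.closure
        ({p : G × ℤ | p.2 = 0 ∧ p.1 ∈ Q} ∪ {((0 : G), (1 : ℤ)), (ρ, -1)}) : Set (G × ℤ))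
      = {p : G × ℤ | (0 ≤ p.2 ∧ p.1 ∈ Q) ∨ (p.2 < 0 ∧ p.1 + p.2 • ρ ∈ Q)} := by
  have hz : ∀ n : ℤ, 0 ≤ n → n • ρ ∈ Q := by
    intro n hn
    lift n to ℕ using hn
    simpa [natCast_zsmul] using Q.nsmul_mem hρ n
  have key : ∀ (m : G) (n : ℤ), ((0 ≤ n ∧ m ∈ Q) ∨ (n < 0 ∧ m + n • ρ ∈ Q)) →
      m + n • ρ ∈ Q := by
    rintro m n (⟨hn, hm⟩ | ⟨_, hm⟩)
    · exact Q.add_mem hm (hz n hn)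
    · exact hm
  set S : AddSubmonoid (G × ℤ) :=
    { carrier := {p : G × ℤ | (0 ≤ p.2 ∧ p.1 ∈ Q) ∨ (p.2 < 0 ∧ p.1 + p.2 • ρ ∈ Q)}
      zero_mem' := Or.inl ⟨le_refl 0, Q.zero_mem⟩
      add_mem' := by
        rintro ⟨m, n⟩ ⟨m', n'⟩ h h'
        simp only [Set.mem_setOf_eq, Prod.mk_add_mk] at h h' ⊢
        by_cases h0 : 0 ≤ n + n'
        · left
          refine ⟨h0, ?_⟩
          rcases h with ⟨hn, hm⟩ | ⟨hn, hm⟩ <;> rcases h' with ⟨hn', hm'⟩ | ⟨hn', hm'⟩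
          · exact Q.add_mem hm hm'
          · have e : m + m' = (m + (m' + n' • ρ)) + (-n') • ρ := by
              rw [neg_zsmul]; abel
            rw [e]
            exact Q.add_mem (Q.add_mem hm hm') (hz _ (by omega))
          · have e : m + m' = ((m + n • ρ) + m') + (-n) • ρ := by
              rw [neg_zsmul]; abel
            rw [e]
            exact Q.add_mem (Q.add_mem hm hm') (hz _ (by omega))
          · omega
        · right
          refine ⟨by omega, ?_⟩
          have e : (m + m') + (n + n') • ρ = (m + n • ρ) + (m' + n' • ρ) := by
            rw [add_zsmul]; abel
          rw [e]
          exact Q.add_mem (key m n h) (key m' n' h') }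
  have hle : AddSubmonoid.closure
      ({p : G × ℤ | p.2 = 0 ∧ p.1 ∈ Q} ∪ {((0 : G), (1 : ℤ)), (ρ, -1)}) ≤ S := by
    rw [AddSubmonoid.closure_le]
    rintro p (⟨hb, ha⟩ | rfl | rfl)
    · exact Or.inl ⟨le_of_eq hb.symm, ha⟩
    · exact Or.inl ⟨zero_le_one, Q.zero_mem⟩
    · refine Or.inr ⟨by norm_num, ?_⟩
      show ρ + (-1 : ℤ) • ρ ∈ Q
      simpa using Q.zero_mem
  apply Set.Subset.antisymm
  · intro p hp
    exact hle hp
  · rintro ⟨m, n⟩ hp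
    have h1 : ((0 : G), (1 : ℤ)) ∈ AddSubmonoid.closure
        ({p : G × ℤ | p.2 = 0 ∧ p.1 ∈ Q} ∪ {((0 : G), (1 : ℤ)), (ρ, -1)}) :=
      AddSubmonoid.subset_closure (Or.inr (by left; rfl))
    have h2 : ((ρ : G), (-1 : ℤ)) ∈ AddSubmonoid.closure
        ({p : G × ℤ | p.2 = 0 ∧ p.1 ∈ Q} ∪ {((0 : G), (1 : ℤ)), (ρ, -1)}) :=
      AddSubmonoid.subset_closure (Or.inr (by right; rfl))
    have hQ0 : ∀ a : G, a ∈ Q → ((a, (0 : ℤ)) : G × ℤ) ∈ AddSubmonoid.closure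
        ({p : G × ℤ | p.2 = 0 ∧ p.1 ∈ Q} ∪ {((0 : G), (1 : ℤ)), (ρ, -1)}) := fun a ha =>
      AddSubmonoid.subset_closure (Or.inl ⟨rfl, ha⟩)
    rcases hp with ⟨hn, hm⟩ | ⟨hn, hm⟩
    · have e : ((m, n) : G × ℤ) = (m, 0) + n.toNat • ((0 : G), (1 : ℤ)) := by
        ext
        · show m = m + n.toNat • (0 : G)
          simp
        · show n = 0 + n.toNat • (1 : ℤ)
          simp; omega
      rw [e]
      exact AddSubmonoid.add_mem _ (hQ0 m hm)
        (AddSubmonoid.nsmul_mem _ h1 n.toNat)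
    · have e : ((m, n) : G × ℤ) = (m + n • ρ, 0) + (-n).toNat • ((ρ : G), (-1 : ℤ)) := by
        have ht : ((-n).toNat : ℤ) = -n := by omega
        ext
        · show m = (m + n • ρ) + (-n).toNat • ρ
          rw [← natCast_zsmul, ht, neg_zsmul]; abel
        · show n = 0 + (-n).toNat • (-1 : ℤ)
          simp [ht]
      rw [e]
      exact AddSubmonoid.add_mem _ (hQ0 _ hm)
        (AddSubmonoid.nsmul_mem _ h2 (-n).toNat)
end

section
/- Let G be an abelian group, Q ⊆ G a submonoid that is saturated in G (i.e. for all m ∈ G and integers k ≥ 1, k·m ∈ Q implies m ∈ Q), and ρ ∈ Q. Let Q₁₂ ⊆ G ⊕ ℤ be the submonoid generated by Q × {0}, (0,1), and (ρ, −1). Then Q₁₂ is saturated in G ⊕ ℤ: if (m, n) ∈ G ⊕ ℤ and k·(m, n) ∈ Q₁₂ for some k ≥ 1, then (m, n) ∈ Q₁₂. -/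
section Aux

variable {G : Type*} [AddCommGroup G] (Q : AddSubmonoid G) (ρ : G)

/-- The explicit predicate describing `Q₁₂`. -/
def stmt6P (v : G × ℤ) : Prop :=
  (0 ≤ v.2 ∧ v.1 ∈ Q) ∨ (v.2 < 0 ∧ v.1 + v.2 • ρ ∈ Q)

lemma stmt6_zsmul_mem (hρ : ρ ∈ Q) {n : ℤ} (hn : 0 ≤ n) : n • ρ ∈ Q := by
  lift n to ℕ using hn
  simpa using Q.nsmul_mem hρ n

lemma stmt6P_add (hρ : ρ ∈ Q) {v w : G × ℤ} (hv : stmt6P Q ρ v) (hw : stmt6P Q ρ w) :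
    stmt6P Q ρ (v + w) := by
  obtain ⟨m₁, n₁⟩ := v
  obtain ⟨m₂, n₂⟩ := w
  simp only [stmt6P, Prod.fst_add, Prod.snd_add] at *
  rcases hv with ⟨h1, hm1⟩ | ⟨h1, hm1⟩ <;> rcases hw with ⟨h2, hm2⟩ | ⟨h2, hm2⟩
  · exact Or.inl ⟨by omega, Q.add_mem hm1 hm2⟩
  · rcases le_or_gt 0 (n₁ + n₂) with h | h
    · refine Or.inl ⟨h, ?_⟩
      have h3 : (-n₂) • ρ ∈ Q := stmt6_zsmul_mem Q ρ hρ (by omega)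
      have := Q.add_mem (Q.add_mem hm1 hm2) h3
      have heq : m₁ + (m₂ + n₂ • ρ) + (-n₂) • ρ = m₁ + m₂ := by
        rw [neg_smul]; abel
      rwa [heq] at this
    · refine Or.inr ⟨h, ?_⟩
      have h3 : n₁ • ρ ∈ Q := stmt6_zsmul_mem Q ρ hρ h1
      have := Q.add_mem (Q.add_mem hm1 hm2) h3
      have heq : m₁ + (m₂ + n₂ • ρ) + n₁ • ρ = m₁ + m₂ + (n₁ + n₂) • ρ := by
        rw [add_smul]; abel
      rwa [heq] at this
  · rcases le_or_gt 0 (n₁ + n₂) with h | h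
    · refine Or.inl ⟨h, ?_⟩
      have h3 : (-n₁) • ρ ∈ Q := stmt6_zsmul_mem Q ρ hρ (by omega)
      have := Q.add_mem (Q.add_mem hm1 hm2) h3
      have heq : m₁ + n₁ • ρ + m₂ + (-n₁) • ρ = m₁ + m₂ := by
        rw [neg_smul]; abel
      rwa [heq] at this
    · refine Or.inr ⟨h, ?_⟩
      have h3 : n₂ • ρ ∈ Q := stmt6_zsmul_mem Q ρ hρ h2
      have := Q.add_mem (Q.add_mem hm1 hm2) h3
      have heq : m₁ + n₁ • ρ + m₂ + n₂ • ρ = m₁ + m₂ + (n₁ + n₂) • ρ := by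
        rw [add_smul]; abel
      rwa [heq] at this
  · refine Or.inr ⟨by omega, ?_⟩
    have := Q.add_mem hm1 hm2
    have heq : m₁ + n₁ • ρ + (m₂ + n₂ • ρ) = m₁ + m₂ + (n₁ + n₂) • ρ := by
      rw [add_smul]; abel
    rwa [heq] at this

lemma stmt6_char (hρ : ρ ∈ Q) (v : G × ℤ) :
    v ∈ AddSubmonoid.closure
        ({p : G × ℤ | p.2 = 0 ∧ p.1 ∈ Q} ∪ {((0 : G), (1 : ℤ)), (ρ, -1)}) ↔
      stmt6P Q ρ v := by
  constructor
  · intro hv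
    induction hv using AddSubmonoid.closure_induction with
    | mem x hx =>
      rcases hx with ⟨h0, hQ⟩ | hx
      · exact Or.inl ⟨by omega, hQ⟩
      · rcases hx with h | h <;> subst h
        · exact Or.inl ⟨by norm_num, Q.zero_mem⟩
        · refine Or.inr ⟨by norm_num, ?_⟩
          simpa using Q.zero_mem
    | zero => exact Or.inl ⟨le_refl 0, Q.zero_mem⟩
    | add x y _ _ hx hy => exact stmt6P_add Q ρ hρ hx hy
  · rintro (⟨hn, hm⟩ | ⟨hn, hm⟩)
    · obtain ⟨m, n⟩ := v
      have h1 : (m, (0:ℤ)) ∈ AddSubmonoid.closure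
          ({p : G × ℤ | p.2 = 0 ∧ p.1 ∈ Q} ∪ {((0 : G), (1 : ℤ)), (ρ, -1)}) :=
        AddSubmonoid.subset_closure (Or.inl ⟨rfl, hm⟩)
      have h2 : ((0:G), (1:ℤ)) ∈ AddSubmonoid.closure
          ({p : G × ℤ | p.2 = 0 ∧ p.1 ∈ Q} ∪ {((0 : G), (1 : ℤ)), (ρ, -1)}) :=
        AddSubmonoid.subset_closure (Or.inr (Or.inl rfl))
      have := AddSubmonoid.add_mem _ h1 (AddSubmonoid.nsmul_mem _ h2 n.toNat)
      have heq : (m, (0:ℤ)) + n.toNat • ((0:G), (1:ℤ)) = (m, n) := by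
        have hnn : (n.toNat : ℤ) = n := by simp only at hn; omega
        ext
        · simp
        · simp [nsmul_eq_mul, hnn]
      rwa [heq] at this
    · obtain ⟨m, n⟩ := v
      simp only at hn hm
      have h1 : (m + n • ρ, (0:ℤ)) ∈ AddSubmonoid.closure
          ({p : G × ℤ | p.2 = 0 ∧ p.1 ∈ Q} ∪ {((0 : G), (1 : ℤ)), (ρ, -1)}) :=
        AddSubmonoid.subset_closure (Or.inl ⟨rfl, hm⟩)
      have h2 : (ρ, (-1:ℤ)) ∈ AddSubmonoid.closure
          ({p : G × ℤ | p.2 = 0 ∧ p.1 ∈ Q} ∪ {((0 : G), (1 : ℤ)), (ρ, -1)}) :=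
        AddSubmonoid.subset_closure (Or.inr (Or.inr rfl))
      have := AddSubmonoid.add_mem _ h1 (AddSubmonoid.nsmul_mem _ h2 (-n).toNat)
      have heq : (m + n • ρ, (0:ℤ)) + (-n).toNat • (ρ, (-1:ℤ)) = (m, n) := by
        have hnn : ((-n).toNat : ℤ) = -n := by omega
        ext
        · simp only [Prod.smul_mk, Prod.mk_add_mk, Prod.fst]
          rw [← natCast_zsmul, hnn, neg_smul]
          abel
        · simp only [Prod.smul_mk, Prod.mk_add_mk, Prod.snd, nsmul_eq_mul]
          omega
      rwa [heq] at this

end Aux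

/-- Let `G` be an abelian group, `Q ⊆ G` a saturated submonoid and
`ρ ∈ Q`.  Then the submonoid `Q₁₂` of `G ⊕ ℤ` generated by `Q × {0}`, `(0,1)` and
`(ρ,-1)` is saturated in `G ⊕ ℤ`. -/
theorem stmt6 (G : Type*) [AddCommGroup G] (Q : AddSubmonoid G)
    (hsat : ∀ (m : G) (k : ℕ), 1 ≤ k → k • m ∈ Q → m ∈ Q)
    (ρ : G) (hρ : ρ ∈ Q) :
    ∀ (v : G × ℤ) (k : ℕ), 1 ≤ k →
      k • v ∈ AddSubmonoid.closure
        ({p : G × ℤ | p.2 = 0 ∧ p.1 ∈ Q} ∪ {((0 : G), (1 : ℤ)), (ρ, -1)}) →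
      v ∈ AddSubmonoid.closure
        ({p : G × ℤ | p.2 = 0 ∧ p.1 ∈ Q} ∪ {((0 : G), (1 : ℤ)), (ρ, -1)}) := by
  intro v k hk hkv
  rw [stmt6_char Q ρ hρ] at hkv ⊢
  obtain ⟨m, n⟩ := v
  have hk1 : (1:ℤ) ≤ (k:ℤ) := by exact_mod_cast hk
  rcases hkv with ⟨hn, hm⟩ | ⟨hn, hm⟩
  · simp only [Prod.smul_mk, nsmul_eq_mul] at hn hm
    refine Or.inl ⟨by nlinarith, hsat m k hk hm⟩
  · simp only [Prod.smul_mk, nsmul_eq_mul] at hn hm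
    have hn' : n < 0 := by nlinarith
    refine Or.inr ⟨hn', hsat (m + n • ρ) k hk ?_⟩
    have heq : k • (m + n • ρ) = k • m + ((k:ℤ) * n) • ρ := by
      rw [smul_add, ← natCast_zsmul (n • ρ) k, ← mul_smul]
    rwa [heq]
end

section
/- Let Q be a cancellative commutative monoid, embedded in its group completion G = Q^gp, and let ρ ∈ Q. Let Q₁₂ ⊆ G ⊕ ℤ be the submonoid generated by Q × {0}, (0,1), and (ρ, −1). Then the map sending a monoid homomorphism h : Q₁₂ → ℝ≥0 to the pair (h|_{Q×{0}}, h(0,1)) is a bijection from the set of monoid homomorphisms Q₁₂ → ℝ≥0 onto the set of pairs (s, λ) where s : Q → ℝ≥0 is a monoid homomorphism and λ ∈ ℝ with 0 ≤ λ ≤ s(ρ). -/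
open scoped NNReal

variable {G : Type*} [AddCommGroup G]

/-- The glued nodal monoid: the submonoid of `G ⊕ ℤ` generated by `Q × {0}`, `(0,1)`
and `(ρ,-1)`. -/
def Q12 (Q : AddSubmonoid G) (ρ : G) : AddSubmonoid (G × ℤ) :=
  AddSubmonoid.closure ({p : G × ℤ | p.2 = 0 ∧ p.1 ∈ Q} ∪ {((0 : G), (1 : ℤ)), (ρ, -1)})

lemma mem_Q12_horizontal (Q : AddSubmonoid G) (ρ : G) {q : G} (hq : q ∈ Q) :
    ((q, 0) : G × ℤ) ∈ Q12 Q ρ :=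
  AddSubmonoid.subset_closure (Or.inl ⟨rfl, hq⟩)

lemma mem_Q12_vert (Q : AddSubmonoid G) (ρ : G) : ((0 : G), (1 : ℤ)) ∈ Q12 Q ρ :=
  AddSubmonoid.subset_closure (Or.inr (Set.mem_insert _ _))

/-- The inclusion `Q → Q₁₂`, `q ↦ (q, 0)`. -/
def inclQ (Q : AddSubmonoid G) (ρ : G) : Q →+ Q12 Q ρ where
  toFun q := ⟨((q : G), 0), mem_Q12_horizontal Q ρ q.2⟩
  map_zero' := Subtype.ext (by simp)
  map_add' a b := Subtype.ext (by simp)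

lemma mem_Q12_diag (Q : AddSubmonoid G) (ρ : G) : ((ρ : G), (-1 : ℤ)) ∈ Q12 Q ρ :=
  AddSubmonoid.subset_closure (Or.inr (Set.mem_insert_iff.mpr (Or.inr rfl)))

lemma exists_diff (Q : AddSubmonoid G) (hgen : AddSubgroup.closure (Q : Set G) = ⊤) (g : G) :
    ∃ a b : Q, g = (a : G) - b := by
  let T : AddSubgroup G :=
  { carrier := {g | ∃ a b : Q, g = (a : G) - b}
    zero_mem' := ⟨0, 0, by simp⟩
    add_mem' := by rintro x y ⟨a, b, rfl⟩ ⟨c, d, rfl⟩; exact ⟨a + c, b + d, by push_cast; abel⟩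
    neg_mem' := by rintro x ⟨a, b, rfl⟩; exact ⟨b, a, by abel⟩ }
  have hle : AddSubgroup.closure (Q : Set G) ≤ T :=
    (AddSubgroup.closure_le T).mpr (fun q hq => ⟨⟨q, hq⟩, 0, by simp⟩)
  exact hle (hgen ▸ AddSubgroup.mem_top g)

lemma key (Q : AddSubmonoid G) (s : Q →+ ℝ≥0) {a b c d : Q}
    (h : (a : G) - b = (c : G) - d) :
    ((s a : ℝ) - s b) = (s c : ℝ) - s d := by
  have h1 : ((a + d : Q) : G) = ((c + b : Q) : G) := by
    push_cast; rw [sub_eq_sub_iff_add_eq_add] at h; exact h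
  have h2 : a + d = c + b := Subtype.ext h1
  have h3 : s a + s d = s c + s b := by rw [← map_add, ← map_add, h2]
  have h4 : ((s a : ℝ)) + s d = (s c : ℝ) + s b := by exact_mod_cast congrArg NNReal.toReal h3
  linarith

/-- Extension of `s : Q →+ ℝ≥0` to `G → ℝ` when `Q` generates `G`. -/
noncomputable def extFun (Q : AddSubmonoid G) (hgen : AddSubgroup.closure (Q : Set G) = ⊤)
    (s : Q →+ ℝ≥0) : G → ℝ := fun g =>
  ((s (exists_diff Q hgen g).choose : ℝ) - s (exists_diff Q hgen g).choose_spec.choose)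

lemma extFun_spec (Q : AddSubmonoid G) (hgen : AddSubgroup.closure (Q : Set G) = ⊤)
    (s : Q →+ ℝ≥0) (g : G) (a b : Q) (h : g = (a : G) - b) :
    extFun Q hgen s g = (s a : ℝ) - s b := by
  have hsp := (exists_diff Q hgen g).choose_spec.choose_spec
  exact key Q s (hsp.symm.trans h)

/-- Extension of `s : Q →+ ℝ≥0` to a group hom `G →+ ℝ` when `Q` generates `G`. -/
noncomputable def extHom (Q : AddSubmonoid G) (hgen : AddSubgroup.closure (Q : Set G) = ⊤)
    (s : Q →+ ℝ≥0) : G →+ ℝ where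
  toFun := extFun Q hgen s
  map_zero' := by rw [extFun_spec Q hgen s 0 0 0 (by simp)]; simp
  map_add' x y := by
    obtain ⟨a, b, ha⟩ := exists_diff Q hgen x
    obtain ⟨c, d, hc⟩ := exists_diff Q hgen y
    show extFun Q hgen s (x + y) = extFun Q hgen s x + extFun Q hgen s y
    rw [extFun_spec Q hgen s x a b ha, extFun_spec Q hgen s y c d hc,
      extFun_spec Q hgen s (x + y) (a + c) (b + d)
        (by rw [ha, hc]; push_cast; exact sub_add_sub_comm _ _ _ _)]
    push_cast [map_add]
    ring

lemma extHom_apply (Q : AddSubmonoid G) (hgen : AddSubgroup.closure (Q : Set G) = ⊤)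
    (s : Q →+ ℝ≥0) (q : Q) : extHom Q hgen s (q : G) = s q := by
  show extFun Q hgen s (q : G) = s q
  rw [extFun_spec Q hgen s (q : G) q 0 (by simp)]
  simp

/-- Let `Q` be a cancellative commutative monoid, embedded in its group
completion `G` (so the subgroup generated by `Q` is all of `G`), and `ρ ∈ Q`.  The map
sending a monoid homomorphism `h : Q₁₂ → ℝ≥0` to the pair `(h|_{Q×{0}}, h (0,1))` is a
bijection from the monoid homomorphisms `Q₁₂ → ℝ≥0` onto the pairs `(s, λ)` with
`s : Q → ℝ≥0` a monoid homomorphism and `λ ∈ ℝ`, `0 ≤ λ ≤ s ρ`. -/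
theorem stmt7 (Q : AddSubmonoid G) (hgen : AddSubgroup.closure (Q : Set G) = ⊤)
    (ρ : G) (hρ : ρ ∈ Q)
    (Φ : ((Q12 Q ρ) →+ ℝ≥0) → ((Q →+ ℝ≥0) × ℝ))
    (hΦ : ∀ h : (Q12 Q ρ) →+ ℝ≥0,
      Φ h = (h.comp (inclQ Q ρ),
        ((h ⟨((0 : G), (1 : ℤ)), mem_Q12_vert Q ρ⟩ : ℝ≥0) : ℝ))) :
    Set.BijOn Φ Set.univ
      {p : (Q →+ ℝ≥0) × ℝ | 0 ≤ p.2 ∧ p.2 ≤ ((p.1 ⟨ρ, hρ⟩ : ℝ≥0) : ℝ)} := by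
  -- Notation for the three distinguished elements of Q12.
  set v : Q12 Q ρ := ⟨((0 : G), (1 : ℤ)), mem_Q12_vert Q ρ⟩ with hv
  set d : Q12 Q ρ := ⟨((ρ : G), (-1 : ℤ)), mem_Q12_diag Q ρ⟩ with hd
  have hvd : v + d = inclQ Q ρ ⟨ρ, hρ⟩ := by
    apply Subtype.ext
    simp [v, d, inclQ, Prod.ext_iff]
  refine ⟨?_, ?_, ?_⟩
  · -- MapsTo
    intro h _
    rw [hΦ h]
    constructor
    · exact NNReal.coe_nonneg _
    · simp only [AddMonoidHom.comp_apply]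
      have : h v ≤ h (inclQ Q ρ ⟨ρ, hρ⟩) := by
        rw [← hvd, map_add]; exact le_add_of_nonneg_right zero_le
      exact_mod_cast this
  · -- InjOn
    intro h₁ _ h₂ _ heq
    rw [hΦ h₁, hΦ h₂] at heq
    have hcomp : h₁.comp (inclQ Q ρ) = h₂.comp (inclQ Q ρ) := congrArg Prod.fst heq
    have hvv : h₁ v = h₂ v := by
      have h2 := congrArg Prod.snd heq
      simp only at h2
      exact NNReal.coe_injective h2
    have hcomp' : ∀ q : Q, h₁ (inclQ Q ρ q) = h₂ (inclQ Q ρ q) := fun q =>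
      congrFun (congrArg DFunLike.coe hcomp) q
    have hdd : h₁ d = h₂ d := by
      have e1 : h₁ v + h₁ d = h₂ v + h₂ d := by
        rw [← map_add, ← map_add, hvd, hcomp' ⟨ρ, hρ⟩]
      rw [hvv] at e1
      exact add_left_cancel e1
    refine DFunLike.ext _ _ ?_
    rintro ⟨x, hx⟩
    induction hx using AddSubmonoid.closure_induction with
    | mem y hy =>
      rcases hy with ⟨hy2, hy1⟩ | hy | hy
      · obtain ⟨y1, y2⟩ := y
        simp only at hy2 hy1
        subst hy2
        simpa [inclQ] using hcomp' ⟨y1, hy1⟩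
      · subst hy; exact hvv
      · simp only [Set.mem_singleton_iff] at hy
        subst hy; exact hdd
    | zero =>
      have h0 : (⟨0, zero_mem _⟩ : Q12 Q ρ) = 0 := rfl
      rw [h0, map_zero, map_zero]
    | add x y hx hy ihx ihy =>
      have hadd : (⟨x + y, add_mem hx hy⟩ : Q12 Q ρ) = ⟨x, hx⟩ + ⟨y, hy⟩ := rfl
      rw [hadd, map_add, map_add, ihx, ihy]
  · -- SurjOn
    rintro ⟨s, lam⟩ ⟨h0, h1⟩
    simp only at h0 h1
    -- the global hom on G × ℤ
    let S : G →+ ℝ := extHom Q hgen s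
    let H : G × ℤ →+ ℝ :=
    { toFun := fun p => S p.1 + p.2 * lam
      map_zero' := by simp
      map_add' := fun p q => by simp [map_add]; ring }
    have hnonneg : ∀ x ∈ Q12 Q ρ, 0 ≤ H x := by
      intro x hx
      induction hx using AddSubmonoid.closure_induction with
      | mem y hy =>
        rcases hy with ⟨hy2, hy1⟩ | hy | hy
        · obtain ⟨y1, y2⟩ := y
          simp only at hy2 hy1
          subst hy2
          have : H (y1, 0) = s ⟨y1, hy1⟩ := by
            simp only [H, AddMonoidHom.coe_mk, ZeroHom.coe_mk]
            simp [S, extHom_apply Q hgen s ⟨y1, hy1⟩]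
          rw [this]
          exact NNReal.coe_nonneg _
        · subst hy
          simpa [H] using h0
        · simp only [Set.mem_singleton_iff] at hy
          subst hy
          have : H (ρ, -1) = (s ⟨ρ, hρ⟩ : ℝ) - lam := by
            simp only [H, AddMonoidHom.coe_mk, ZeroHom.coe_mk]
            rw [show S ρ = s ⟨ρ, hρ⟩ from extHom_apply Q hgen s ⟨ρ, hρ⟩]
            push_cast; ring
          rw [this]
          linarith
      | zero => simp
      | add x y hx hy ihx ihy =>
        rw [map_add]; positivity
    let h : Q12 Q ρ →+ ℝ≥0 :=
    { toFun := fun x => ⟨H x, hnonneg x x.2⟩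
      map_zero' := by ext; simp; rfl
      map_add' := fun x y => by ext; push_cast; exact H.map_add x y }
    refine ⟨h, Set.mem_univ _, ?_⟩
    rw [hΦ h]
    refine Prod.ext ?_ ?_
    · ext q
      have : (h.comp (inclQ Q ρ)) q = s q := by
        apply NNReal.coe_injective
        simp only [AddMonoidHom.comp_apply, h, inclQ, AddMonoidHom.coe_mk, ZeroHom.coe_mk]
        show H ((q : G), 0) = (s q : ℝ)
        simp [H, S, extHom_apply Q hgen s q]
      rw [this]
    · show ((h v : ℝ≥0) : ℝ) = lam
      show H ((0 : G), (1 : ℤ)) = lam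
      simp [H]
end

section
/- The set M = {(n, m) ∈ ℕ × ℤ : m ≥ 0 whenever n = 0} is a submonoid of ℕ × ℤ which is not finitely generated. -/
private lemma aux_zero (l : Multiset (ℕ × ℤ)) (hl : ∀ x ∈ l, x.1 = 0 → 0 ≤ x.2)
    (h0 : (l.map Prod.fst).sum = 0) : 0 ≤ (l.map Prod.snd).sum := by
  induction l using Multiset.induction with
  | empty => simp
  | cons a s ih =>
    simp only [Multiset.map_cons, Multiset.sum_cons, Nat.add_eq_zero] at h0 ⊢
    have ha : 0 ≤ a.2 := hl a (Multiset.mem_cons_self a s) h0.1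
    have := ih (fun x hx => hl x (Multiset.mem_cons_of_mem hx)) h0.2
    linarith

private lemma aux_one (B : ℤ) (hB : 0 ≤ B) (l : Multiset (ℕ × ℤ))
    (hl : ∀ x ∈ l, (x.1 = 0 → 0 ≤ x.2) ∧ -B ≤ x.2)
    (h1 : (l.map Prod.fst).sum ≤ 1) : -B ≤ (l.map Prod.snd).sum := by
  induction l using Multiset.induction with
  | empty => simpa using hB
  | cons a s ih =>
    simp only [Multiset.map_cons, Multiset.sum_cons] at h1 ⊢
    rcases Nat.eq_zero_or_pos a.1 with h | h
    · have ha : 0 ≤ a.2 := (hl a (Multiset.mem_cons_self a s)).1 h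
      have := ih (fun x hx => hl x (Multiset.mem_cons_of_mem hx)) (by omega)
      linarith
    · have hs0 : (s.map Prod.fst).sum = 0 := by omega
      have := aux_zero s (fun x hx => (hl x (Multiset.mem_cons_of_mem hx)).1) hs0
      have ha := (hl a (Multiset.mem_cons_self a s)).2
      linarith

/-- The set `M = {(n,m) ∈ ℕ × ℤ : m ≥ 0 whenever n = 0}` is a
submonoid of `ℕ × ℤ` which is not finitely generated. -/
theorem stmt10 :
    ∃ M : AddSubmonoid (ℕ × ℤ),
      (M : Set (ℕ × ℤ)) = {p : ℕ × ℤ | p.1 = 0 → 0 ≤ p.2} ∧ ¬ M.FG := by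
  refine ⟨⟨⟨{p : ℕ × ℤ | p.1 = 0 → 0 ≤ p.2}, ?_⟩, ?_⟩, rfl, ?_⟩
  · rintro a b ha hb hab
    simp only [Set.mem_setOf_eq, Prod.fst_add, Prod.snd_add] at *
    have h1 : a.1 = 0 := by omega
    have h2 : b.1 = 0 := by omega
    have := ha h1; have := hb h2; omega
  · exact fun _ => le_rfl
  · rintro ⟨S, hS⟩
    set B : ℤ := ((S.sup fun s => (-s.2).toNat : ℕ) : ℤ) with hBdef
    have hB : 0 ≤ B := Int.ofNat_nonneg _
    have hSB : ∀ s ∈ S, -B ≤ s.2 := by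
      intro s hs
      have : (-s.2).toNat ≤ S.sup fun s => (-s.2).toNat := Finset.le_sup (f := fun s => (-s.2).toNat) hs
      have := Int.self_le_toNat (-s.2)
      omega
    have hp : ((1 : ℕ), -(B + 1)) ∈ AddSubmonoid.closure (S : Set (ℕ × ℤ)) := by
      rw [hS]
      intro h; simp at h
    obtain ⟨l, hl1, hl2⟩ := AddSubmonoid.exists_multiset_of_mem_closure hp
    have hSM : ∀ s ∈ S, s.1 = 0 → 0 ≤ s.2 := by
      intro s hs
      have : s ∈ AddSubmonoid.closure (S : Set (ℕ × ℤ)) := AddSubmonoid.subset_closure hs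
      rw [hS] at this
      exact this
    have hfst : (l.map Prod.fst).sum = 1 := by
      have h := (AddMonoidHom.fst ℕ ℤ).map_multiset_sum l
      simp only [AddMonoidHom.coe_fst] at h
      rw [← h, hl2]
    have hsnd : (l.map Prod.snd).sum = -(B + 1) := by
      have h := (AddMonoidHom.snd ℕ ℤ).map_multiset_sum l
      simp only [AddMonoidHom.coe_snd] at h
      rw [← h, hl2]
    have := aux_one B hB l
      (fun x hx => ⟨hSM x (hl1 x hx), hSB x (hl1 x hx)⟩) (le_of_eq hfst)
    omega
end

section
/- Let Q be a fine (finitely generated, cancellative) sharp commutative monoid (its only unit is 0), let P be any commutative monoid with trivial units, and let f : P → Q be a monoid homomorphism. Then f⁻¹(0) = {0} (f is a local homomorphism) if and only if there exists a monoid homomorphism x : Q → ℝ≥0 such that x(f(p)) > 0 for every p ∈ P ∖ {0}. -/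
set_option maxHeartbeats 1000000

open Finset
open scoped NNReal

private lemma aux_inv_sum_mul_lt {m : ℕ} (f g : Fin m → ℚ) (hf : ∀ i, 0 ≤ f i)
    (hg : ∀ i, 0 < g i) (j : Fin m) :
    (∑ i, f i / g i + 1)⁻¹ * f j < g j := by
  set S := ∑ i, f i / g i with hS
  have hS0 : 0 ≤ S := Finset.sum_nonneg fun i _ => div_nonneg (hf i) (hg i).le
  have h1 : f j / g j ≤ S :=
    Finset.single_le_sum (f := fun i => f i / g i)
      (fun i _ => div_nonneg (hf i) (hg i).le) (mem_univ j)
  have hS1 : (0:ℚ) < S + 1 := by linarith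
  rw [inv_mul_eq_div, div_lt_iff₀ hS1]
  have h2 : f j ≤ S * g j := (div_le_iff₀ (hg j)).mp h1
  nlinarith [hg j]

theorem gordan {V : Type} [AddCommGroup V] [Module ℚ V]
    (hV : ∀ v : V, v ≠ 0 → ∃ φ : V →ₗ[ℚ] ℚ, 0 < φ v) :
    ∀ (m : ℕ) (a : Fin m → V),
      (∃ c : Fin m → ℚ, (∀ i, 0 ≤ c i) ∧ (∃ i, 0 < c i) ∧ ∑ i, c i • a i = 0) ∨
      (∃ φ : V →ₗ[ℚ] ℚ, ∀ i, 0 < φ (a i)) := by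
  intro m
  induction m with
  | zero => exact fun a => Or.inr ⟨0, fun i => i.elim0⟩
  | succ m ih =>
    intro a
    by_cases h0 : a 0 = 0
    · refine Or.inl ⟨Pi.single 0 1, ?_, ⟨0, by simp⟩, ?_⟩
      · intro i; by_cases h : i = 0 <;> simp [Pi.single_apply, h]
      · rw [Finset.sum_eq_single 0]
        · simp [h0]
        · intro i _ hi; simp [Pi.single_apply, hi]
        · simp
    rcases Nat.eq_zero_or_pos m with hm | hm
    · subst hm
      obtain ⟨φ, hφ⟩ := hV (a 0) h0
      exact Or.inr ⟨φ, fun i => Fin.cases hφ (fun j => j.elim0) i⟩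
    rcases ih (fun i => a i.succ) with ⟨c', hc0, ⟨k, hk⟩, hsum⟩ | ⟨φ, hφ⟩
    · refine Or.inl ⟨Fin.cons 0 c', ?_, ⟨k.succ, by simpa using hk⟩, ?_⟩
      · intro i
        refine Fin.cases ?_ ?_ i
        · simp
        · intro j; simpa using hc0 j
      · rw [Fin.sum_univ_succ]; simpa using hsum
    by_cases hpos : 0 < φ (a 0)
    · exact Or.inr ⟨φ, fun i => Fin.cases hpos hφ i⟩
    push_neg at hpos
    have hbdich := ih (fun i => φ (a i.succ) • a 0 - φ (a 0) • a i.succ)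
    rcases hbdich with ⟨d, hd0, ⟨k, hk⟩, hdsum⟩ | ⟨ψ, hψ⟩
    · refine Or.inl ⟨Fin.cons (∑ i, d i * φ (a i.succ)) (fun i => -φ (a 0) * d i), ?_, ?_, ?_⟩
      · intro i
        refine Fin.cases ?_ ?_ i
        · simp only [Fin.cons_zero]
          exact Finset.sum_nonneg fun i _ => mul_nonneg (hd0 i) (hφ i).le
        · intro j
          simp only [Fin.cons_succ]
          exact mul_nonneg (by linarith) (hd0 j)
      · exact ⟨0, by
          simp only [Fin.cons_zero]
          exact Finset.sum_pos' (fun i _ => mul_nonneg (hd0 i) (hφ i).le)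
            ⟨k, Finset.mem_univ k, mul_pos hk (hφ k)⟩⟩
      · rw [Fin.sum_univ_succ]
        simp only [Fin.cons_zero, Fin.cons_succ]
        have key : ∑ i, d i • (φ (a i.succ) • a 0) = ∑ i, d i • (φ (a 0) • a i.succ) := by
          have h := hdsum
          simp only [smul_sub, Finset.sum_sub_distrib, sub_eq_zero] at h
          exact h
        have e1 : ∀ i : Fin m, (-φ (a 0) * d i) • a i.succ = -(d i • (φ (a 0) • a i.succ)) := by
          intro i
          rw [smul_smul, ← neg_smul]; ring_nf
        calc (∑ i, d i * φ (a i.succ)) • a 0 + ∑ i, (-φ (a 0) * d i) • a i.succ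
            = ∑ i, d i • (φ (a i.succ) • a 0) + -∑ i, d i • (φ (a 0) • a i.succ) := by
              rw [Finset.sum_smul, ← Finset.sum_neg_distrib]
              congr 1
              · exact Finset.sum_congr rfl fun i _ => by rw [smul_smul]
              · exact Finset.sum_congr rfl fun i _ => e1 i
          _ = 0 := by rw [key, add_neg_cancel]
    · -- dual branch
      have hψb : ∀ i : Fin m, 0 < φ (a i.succ) * ψ (a 0) - φ (a 0) * ψ (a i.succ) := by
        intro i
        have := hψ i
        simpa [map_sub, map_smul, smul_eq_mul] using this
      by_cases ht : φ (a 0) < 0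
      · set ε : ℚ := (∑ i : Fin m, φ (a i.succ) / (φ (a i.succ) * ψ (a 0) - φ (a 0) * ψ (a i.succ)) + 1)⁻¹
          with hε
        have hεkey : ∀ j : Fin m, ε * φ (a j.succ) < φ (a j.succ) * ψ (a 0) - φ (a 0) * ψ (a j.succ) := by
          rw [hε]
          exact fun j => aux_inv_sum_mul_lt (fun i => φ (a i.succ))
            (fun i => φ (a i.succ) * ψ (a 0) - φ (a 0) * ψ (a i.succ)) (fun i => (hφ i).le) hψb j
        have hε0 : 0 < ε := by
          rw [hε]
          refine inv_pos.mpr ?_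
          have : 0 ≤ ∑ i : Fin m, φ (a i.succ) / (φ (a i.succ) * ψ (a 0) - φ (a 0) * ψ (a i.succ)) :=
            Finset.sum_nonneg fun i _ => div_nonneg (hφ i).le (hψb i).le
          linarith
        refine Or.inr ⟨(-φ (a 0)) • ψ + (ψ (a 0) - ε) • φ, fun i => ?_⟩
        refine Fin.cases ?_ ?_ i
        · simp only [LinearMap.add_apply, LinearMap.smul_apply, smul_eq_mul]
          nlinarith
        · intro j
          simp only [LinearMap.add_apply, LinearMap.smul_apply, smul_eq_mul]
          have := hεkey j
          nlinarith
      · have ht0 : φ (a 0) = 0 := le_antisymm hpos (not_lt.mp ht)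
        have i0 : Fin m := ⟨0, hm⟩
        have hψa0 : 0 < ψ (a 0) := by
          have h1 := hψb ⟨0, hm⟩
          rw [ht0] at h1
          nlinarith [hφ (⟨0, hm⟩ : Fin m)]
        set s : ℚ := (∑ i : Fin m, (1 + ψ (a i.succ) ^ 2) / φ (a i.succ) + 1)⁻¹ with hs
        have hskey : ∀ j : Fin m, s * (1 + ψ (a j.succ) ^ 2) < φ (a j.succ) := by
          rw [hs]
          exact fun j => aux_inv_sum_mul_lt (fun i => 1 + ψ (a i.succ) ^ 2)
            (fun i => φ (a i.succ)) (fun i => by positivity) hφ j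
        have hs0 : 0 < s := by
          rw [hs]
          refine inv_pos.mpr ?_
          have : 0 ≤ ∑ i : Fin m, (1 + ψ (a i.succ) ^ 2) / φ (a i.succ) :=
            Finset.sum_nonneg fun i _ => div_nonneg (by positivity) (hφ i).le
          linarith
        refine Or.inr ⟨φ + s • ψ, fun i => ?_⟩
        refine Fin.cases ?_ ?_ i
        · simp only [LinearMap.add_apply, LinearMap.smul_apply, smul_eq_mul, ht0]
          nlinarith
        · intro j
          simp only [LinearMap.add_apply, LinearMap.smul_apply, smul_eq_mul]
          have := hskey j
          nlinarith [sq_nonneg (1 + ψ (a j.succ))]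

lemma key_local (Q : Type*) [AddCancelCommMonoid Q] [AddMonoid.FG Q]
    (hQ : ∀ a b : Q, a + b = 0 → a = 0) :
    ∃ x : Q →+ ℝ≥0, ∀ q : Q, q ≠ 0 → 0 < x q := by
  classical
  obtain ⟨S, hS⟩ : ∃ S : Finset Q, AddSubmonoid.closure (S : Set Q) = ⊤ := AddMonoid.FG.fg_top
  set S' : Finset Q := S.erase 0 with hS'
  set m : ℕ := S'.card with hm
  set g : Fin m → Q := fun i => ((S'.equivFin.symm i : Q)) with hg
  have hgne : ∀ i, g i ≠ 0 := fun i => Finset.ne_of_mem_erase (S'.equivFin.symm i).2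
  have hrange : Set.range g = (S' : Set Q) := by
    ext s
    constructor
    · rintro ⟨i, rfl⟩; exact (S'.equivFin.symm i).2
    · intro hs
      exact ⟨S'.equivFin ⟨s, hs⟩, by simp [hg]⟩
  have hgen : AddSubmonoid.closure (Set.range g) = ⊤ := by
    rw [hrange, eq_top_iff, ← hS]
    refine AddSubmonoid.closure_le.2 ?_
    intro s hs
    by_cases h : s = (0 : Q)
    · subst h; exact AddSubmonoid.zero_mem _
    · exact AddSubmonoid.subset_closure (Finset.mem_coe.2 (Finset.mem_erase.2 ⟨h, hs⟩))
  -- the evaluation hom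
  set σ : (Fin m → ℕ) →+ Q :=
    { toFun := fun v => ∑ i, v i • g i
      map_zero' := by simp
      map_add' := by intro v w; simp [add_smul, Finset.sum_add_distrib] } with hσ
  have hσsingle : ∀ i, σ (Pi.single i 1) = g i := by
    intro i
    show ∑ j, (Pi.single i 1 : Fin m → ℕ) j • g j = g i
    rw [Finset.sum_eq_single i]
    · simp
    · intro j _ hj; simp [Pi.single_apply, hj]
    · simp
  have hσsurj : ∀ q : Q, ∃ v, σ v = q := by
    intro q
    have hq : q ∈ AddSubmonoid.closure (Set.range g) := by rw [hgen]; trivial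
    refine AddSubmonoid.closure_induction (motive := fun x _ => ∃ v, σ v = x) ?_ ?_ ?_ hq
    · rintro x ⟨i, rfl⟩
      exact ⟨Pi.single i 1, hσsingle i⟩
    · exact ⟨0, map_zero σ⟩
    · rintro x y _ _ ⟨v, hv⟩ ⟨w, hw⟩
      exact ⟨v + w, by rw [map_add, hv, hw]⟩
  set u : Q → (Fin m → ℕ) := fun q => (hσsurj q).choose with huu
  have hu : ∀ q, σ (u q) = q := fun q => (hσsurj q).choose_spec
  -- the relation space
  set D : Set (Fin m → ℚ) :=
    {d | ∃ v w : Fin m → ℕ, σ v = σ w ∧ d = fun i => (v i : ℚ) - (w i : ℚ)} with hD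
  set M : Submodule ℚ (Fin m → ℚ) := Submodule.span ℚ D with hM
  set π : (Fin m → ℚ) →ₗ[ℚ] ((Fin m → ℚ) ⧸ M) := M.mkQ with hπ
  have hπeq : ∀ v w : Fin m → ℕ, σ v = σ w →
      π (fun i => (v i : ℚ)) = π (fun i => (w i : ℚ)) := by
    intro v w h
    rw [← sub_eq_zero, ← map_sub]
    have hmem : ((fun i => (v i : ℚ)) - fun i => (w i : ℚ)) ∈ M :=
      Submodule.subset_span ⟨v, w, h, by funext i; simp⟩
    simpa [hπ, Submodule.mkQ_apply] using (Submodule.Quotient.mk_eq_zero M).mpr hmem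
  -- positive functionals on nonzero vectors of the quotient
  have hV : ∀ v : (Fin m → ℚ) ⧸ M, v ≠ 0 →
      ∃ φ : ((Fin m → ℚ) ⧸ M) →ₗ[ℚ] ℚ, 0 < φ v := by
    intro v hv
    set B := Module.finBasis ℚ ((Fin m → ℚ) ⧸ M) with hB
    have h1 : ∃ k, B.repr v k ≠ 0 := by
      by_contra h
      push_neg at h
      apply hv
      have h2 : B.repr v = 0 := Finsupp.ext h
      have := congrArg B.repr.symm h2
      simpa using this
    obtain ⟨k, hk⟩ := h1
    refine ⟨(B.repr v k)⁻¹ • B.coord k, ?_⟩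
    simp only [LinearMap.smul_apply, Module.Basis.coord_apply, smul_eq_mul]
    rw [inv_mul_cancel₀ hk]
    exact zero_lt_one
  set a : Fin m → ((Fin m → ℚ) ⧸ M) := fun i => π (Pi.single i (1 : ℚ)) with ha
  have hcastsingle : ∀ i : Fin m,
      (fun j => (((Pi.single i 1 : Fin m → ℕ)) j : ℚ)) = Pi.single i (1 : ℚ) := by
    intro i; funext j
    by_cases h : j = i
    · subst h; simp
    · simp [Pi.single_eq_of_ne h]
  rcases gordan hV m a with ⟨c, hc0, ⟨k, hck⟩, hcsum⟩ | ⟨φ, hφ⟩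
  · -- relation branch: contradiction with sharpness
    exfalso
    have hπc : π (fun j => c j) = 0 := by
      have h1 : ∑ i, c i • a i = π (fun j => c j) := by
        rw [ha]
        calc ∑ i, c i • π (Pi.single i (1:ℚ))
            = π (∑ i, c i • (Pi.single i (1:ℚ) : Fin m → ℚ)) := by
              rw [map_sum]
              exact Finset.sum_congr rfl fun i _ => (map_smul π _ _).symm
          _ = π (fun j => c j) := by
              congr 1
              funext j
              rw [Finset.sum_apply]
              simp [Pi.single_apply, mul_ite]
      rw [← h1, hcsum]
    have hcM : (fun j => c j) ∈ M := by
      rw [hπ, Submodule.mkQ_apply] at hπc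
      exact (Submodule.Quotient.mk_eq_zero M).mp hπc
    rw [hM, Submodule.mem_span_set'] at hcM
    obtain ⟨n, r, dvec, hlin⟩ := hcM
    have hdj : ∀ j : Fin n, ∃ v w : Fin m → ℕ,
        σ v = σ w ∧ (dvec j : Fin m → ℚ) = fun i => (v i : ℚ) - (w i : ℚ) := fun j => (dvec j).2
    choose v w hσvw hdw using hdj
    -- common denominator
    set N : ℕ := (∏ i, (c i).den) * (∏ j, (r j).den) with hN
    have hNpos : 0 < N := by positivity
    have hdenc : ∀ i : Fin m, ((c i).den : ℤ) ∣ (N : ℤ) := by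
      intro i
      have : (c i).den ∣ N := Dvd.dvd.mul_right (Finset.dvd_prod_of_mem _ (mem_univ i)) _
      exact_mod_cast this
    have hdenr : ∀ j : Fin n, ((r j).den : ℤ) ∣ (N : ℤ) := by
      intro j
      have : (r j).den ∣ N := Dvd.dvd.mul_left (Finset.dvd_prod_of_mem _ (mem_univ j)) _
      exact_mod_cast this
    have hclear : ∀ q : ℚ, ((q.den : ℤ) ∣ (N : ℤ)) → ∃ z : ℤ, (z : ℚ) = N * q := by
      intro q hq
      obtain ⟨t, ht⟩ := hq
      refine ⟨t * q.num, ?_⟩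
      have h1 : ((q.den : ℚ)) * q = q.num := by
        rw [mul_comm]; exact_mod_cast Rat.mul_den_eq_num q
      push_cast
      rw [show ((N:ℚ)) = (q.den : ℚ) * t by exact_mod_cast congrArg (Int.cast : ℤ → ℚ) ht]
      rw [mul_comm ((q.den : ℚ)) (t:ℚ), mul_assoc, h1]
    choose zc hzc using fun i => hclear (c i) (hdenc i)
    choose z hz using fun j => hclear (r j) (hdenr j)
    -- nonnegative numerators for c
    have hzc0 : ∀ i, 0 ≤ zc i := by
      intro i
      have h1 : (0:ℚ) ≤ (zc i : ℚ) := by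
        rw [hzc i]
        exact mul_nonneg (by positivity) (hc0 i)
      exact_mod_cast h1
    have hkey : ∀ i : Fin m, (zc i : ℚ) = ∑ j, (z j : ℚ) * ((v j i : ℚ) - (w j i : ℚ)) := by
      intro i
      have h1 : ∑ j, r j * (dvec j : Fin m → ℚ) i = c i := by
        have h2 := congrFun hlin i
        simpa [Finset.sum_apply] using h2
      rw [hzc i, ← h1, Finset.mul_sum]
      refine Finset.sum_congr rfl fun j _ => ?_
      rw [show ((dvec j : Fin m → ℚ)) i = (v j i : ℚ) - w j i from by rw [hdw j], ← mul_assoc, ← hz j]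
    set zp : Fin n → ℕ := fun j => (z j).toNat with hzp
    set zn : Fin n → ℕ := fun j => (-(z j)).toNat with hzn
    have hzpn : ∀ j, (zp j : ℚ) - zn j = (z j : ℚ) := by
      intro j
      have h1 := Int.toNat_sub_toNat_neg (z j)
      have h2 := congrArg (Int.cast : ℤ → ℚ) h1
      push_cast at h2
      exact_mod_cast h2
    set nv : Fin m → ℕ := fun i => (zc i).toNat with hnv
    have hnvzc : ∀ i, (nv i : ℚ) = (zc i : ℚ) := by
      intro i
      have h1 : ((zc i).toNat : ℤ) = zc i := Int.toNat_of_nonneg (hzc0 i)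
      exact_mod_cast congrArg (Int.cast : ℤ → ℚ) h1
    have hnvq : ∀ i, (nv i : ℚ) = N * c i := fun i => by rw [hnvzc i, hzc i]
    have hAB : ∀ i : Fin m, ((nv i : ℚ) + ∑ j, ((zn j : ℚ) * v j i + (zp j : ℚ) * w j i))
        = ∑ j, ((zp j : ℚ) * v j i + (zn j : ℚ) * w j i) := by
      intro i
      have h1 : (nv i : ℚ) = ∑ j, ((zp j : ℚ) - zn j) * ((v j i : ℚ) - w j i) := by
        rw [hnvzc i, hkey i]
        exact Finset.sum_congr rfl fun j _ => by rw [hzpn j]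
      rw [h1, ← Finset.sum_add_distrib]
      exact Finset.sum_congr rfl fun j _ => by ring
    have hABN : ∀ i, nv i + ∑ j, (zn j * v j i + zp j * w j i)
        = ∑ j, (zp j * v j i + zn j * w j i) := by
      intro i
      exact_mod_cast hAB i
    have hvec : (nv + ∑ j, (zn j • v j + zp j • w j)) = ∑ j, (zp j • v j + zn j • w j) := by
      funext i
      simp only [Pi.add_apply, Finset.sum_apply, Pi.smul_apply, smul_eq_mul]
      exact hABN i
    have hσexp : ∀ vv : Fin m → ℕ, σ vv = ∑ i, vv i • g i := fun vv => rfl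
    have hσA : σ nv + ∑ j, (zn j • σ (v j) + zp j • σ (w j))
        = ∑ j, (zp j • σ (v j) + zn j • σ (w j)) := by
      have h1 := congrArg σ hvec
      rw [map_add, map_sum, map_sum] at h1
      have e1 : ∀ j : Fin n, σ (zn j • v j + zp j • w j) = zn j • σ (v j) + zp j • σ (w j) := by
        intro j; rw [map_add, map_nsmul, map_nsmul]
      have e2 : ∀ j : Fin n, σ (zp j • v j + zn j • w j) = zp j • σ (v j) + zn j • σ (w j) := by
        intro j; rw [map_add, map_nsmul, map_nsmul]
      rw [Finset.sum_congr rfl fun j _ => e1 j, Finset.sum_congr rfl fun j _ => e2 j] at h1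
      exact h1
    have hσA' : σ nv + ∑ j, (zn j • σ (v j) + zp j • σ (v j))
        = ∑ j, (zp j • σ (v j) + zn j • σ (v j)) := by
      simp only [hσvw] at hσA ⊢
      exact hσA
    have hσnv : σ nv = 0 := by
      have h2 : ∑ j, (zn j • σ (v j) + zp j • σ (v j))
          = ∑ j, (zp j • σ (v j) + zn j • σ (v j)) :=
        Finset.sum_congr rfl fun j _ => by rw [add_comm]
      rw [h2] at hσA'
      have h3 : σ nv + ∑ j, (zp j • σ (v j) + zn j • σ (v j))
          = 0 + ∑ j, (zp j • σ (v j) + zn j • σ (v j)) := by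
        rw [zero_add]; exact hσA'
      exact add_right_cancel h3
    have hnvk : nv k ≠ 0 := by
      intro h
      have h1 : (nv k : ℚ) = 0 := by rw [h]; simp
      rw [hnvq k] at h1
      have h2 : 0 < (N : ℚ) * c k := mul_pos (by exact_mod_cast hNpos) hck
      linarith
    obtain ⟨t, ht⟩ := Nat.exists_eq_succ_of_ne_zero hnvk
    have hsplit : (0 : Q) = nv k • g k + ∑ i ∈ Finset.univ.erase k, nv i • g i := by
      rw [← hσnv, hσexp nv]
      exact (Finset.add_sum_erase Finset.univ (fun i => nv i • g i) (Finset.mem_univ k)).symm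
    rw [ht, succ_nsmul] at hsplit
    have hfinal : g k + (t • g k + ∑ i ∈ Finset.univ.erase k, nv i • g i) = 0 := by
      rw [eq_comm, hsplit]
      abel
    exact hgne k (hQ (g k) _ hfinal)
  · -- functional branch : build x
    set xq : Q → ℚ := fun q => φ (π fun i => (u q i : ℚ)) with hxq
    have hxadd : ∀ q r : Q, xq (q + r) = xq q + xq r := by
      intro q r
      have h1 : σ (u (q + r)) = σ (u q + u r) := by rw [map_add, hu, hu, hu]
      have h2 := hπeq _ _ h1
      have h3 : (fun i => ((u q + u r) i : ℚ))
          = (fun i => (u q i : ℚ)) + fun i => (u r i : ℚ) := by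
        funext i
        push_cast [Pi.add_apply]
        rfl
      rw [hxq]
      dsimp only
      rw [h2, h3, map_add, map_add]
    have hx0 : xq 0 = 0 := by
      have h1 : σ (u 0) = σ 0 := by rw [hu, map_zero]
      have h2 := hπeq (u 0) 0 h1
      rw [hxq]
      dsimp only
      rw [h2]
      have h3 : (fun i => ((0 : Fin m → ℕ) i : ℚ)) = (0 : Fin m → ℚ) := by
        funext i; simp
      rw [h3, map_zero, map_zero]
    have hxg : ∀ i, xq (g i) = φ (a i) := by
      intro i
      have h1 : σ (u (g i)) = σ (Pi.single i 1) := by rw [hu, hσsingle]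
      have h2 := hπeq _ _ h1
      rw [hxq]
      dsimp only
      rw [h2, hcastsingle i]
    have hposall : ∀ q : Q, q = 0 ∨ 0 < xq q := by
      intro q
      have hq : q ∈ AddSubmonoid.closure (Set.range g) := by rw [hgen]; trivial
      refine AddSubmonoid.closure_induction (motive := fun x _ => x = 0 ∨ 0 < xq x) ?_ ?_ ?_ hq
      · rintro x ⟨i, rfl⟩
        right
        rw [hxg i]
        exact hφ i
      · left; rfl
      · rintro x y _ _ (rfl | hx) (rfl | hy)
        · left; rw [add_zero]
        · right; rwa [zero_add]
        · right; rwa [add_zero]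
        · right; rw [hxadd]; linarith
    have hnn : ∀ q : Q, (0:ℝ) ≤ ((xq q : ℚ) : ℝ) := by
      intro q
      rcases hposall q with h | h
      · rw [h, hx0]; simp
      · exact_mod_cast h.le
    refine ⟨{ toFun := fun q => Real.toNNReal ((xq q : ℚ) : ℝ)
              map_zero' := by
                show ((xq 0 : ℚ) : ℝ).toNNReal = 0
                rw [hx0]; simp
              map_add' := by
                intro q r
                show ((xq (q + r) : ℚ) : ℝ).toNNReal
                    = ((xq q : ℚ) : ℝ).toNNReal + ((xq r : ℚ) : ℝ).toNNReal
                rw [hxadd]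
                push_cast
                exact Real.toNNReal_add (hnn q) (hnn r) }, ?_⟩
    intro q hq
    rcases hposall q with h | h
    · exact absurd h hq
    · show 0 < Real.toNNReal _
      rw [Real.toNNReal_pos]
      exact_mod_cast h

/-- Let `Q` be a fine sharp commutative monoid, `P` a commutative
monoid with trivial units, and `f : P → Q` a monoid homomorphism.  Then `f` is local
(`f⁻¹(0) = {0}`) iff there is a monoid homomorphism `x : Q → ℝ≥0` with `x (f p) > 0`
for every `p ≠ 0`. -/
theorem stmt12 (Q P : Type*) [AddCancelCommMonoid Q] [AddMonoid.FG Q]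
    (hQ : ∀ a b : Q, a + b = 0 → a = 0)
    [AddCommMonoid P] (hP : ∀ a b : P, a + b = 0 → a = 0)
    (f : P →+ Q) :
    (∀ p : P, f p = 0 → p = 0) ↔
      ∃ x : Q →+ ℝ≥0, ∀ p : P, p ≠ 0 → 0 < x (f p) := by
  constructor
  · intro hloc
    obtain ⟨x, hx⟩ := key_local Q hQ
    refine ⟨x, fun p hp => hx (f p) fun h => hp (hloc p h)⟩
  · rintro ⟨x, hx⟩ p hfp
    by_contra hp
    have h1 := hx p hp
    rw [hfp, map_zero] at h1
    exact lt_irrefl 0 h1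
end

section
/- Every fine sharp commutative monoid Q (finitely generated, cancellative, with 0 the only unit) admits a monoid homomorphism u : Q → ℕ such that u(q) > 0 for all q ∈ Q ∖ {0}. -/
open Matrix

variable {n : ℕ}

/-- membership in the cone generated by a list of vectors -/
def InCone : List (Fin n → ℚ) → (Fin n → ℚ) → Prop
  | [] => fun b => b = 0
  | a :: l => fun b => ∃ μ : ℚ, 0 ≤ μ ∧ InCone l (b - μ • a)

lemma incone_congr {l : List (Fin n → ℚ)} {b b' : Fin n → ℚ} (h : InCone l b) (e : b = b') :
    InCone l b' := e ▸ h

/-- Farkas' lemma over ℚ, by induction on the list of generators. -/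
lemma farkas (l : List (Fin n → ℚ)) (b : Fin n → ℚ) :
    InCone l b ∨ ∃ y : Fin n → ℚ, (∀ a ∈ l, y ⬝ᵥ a ≤ 0) ∧ 0 < y ⬝ᵥ b := by
  obtain ⟨m, hm⟩ : ∃ m, l.length = m := ⟨_, rfl⟩
  induction m generalizing l b with
  | zero =>
    rw [List.length_eq_zero_iff] at hm
    subst hm
    by_cases hb : b = 0
    · exact Or.inl hb
    · refine Or.inr ⟨b, by simp, ?_⟩
      have := (dotProduct_self_eq_zero (v := b)).not.2 hb
      have h2 : 0 ≤ b ⬝ᵥ b := Finset.sum_nonneg fun i _ => mul_self_nonneg _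
      exact lt_of_le_of_ne h2 (Ne.symm this)
  | succ m ih =>
    match l with
    | a :: l =>
    simp only [List.length_cons, Nat.add_right_cancel_iff] at hm
    rcases ih l b hm with h | ⟨y, hy, hyb⟩
    · exact Or.inl ⟨0, le_refl 0, by simpa using h⟩
    by_cases hya : y ⬝ᵥ a ≤ 0
    · exact Or.inr ⟨y, by intro x hx; rcases List.mem_cons.1 hx with rfl | hx
                          exacts [hya, hy x hx], hyb⟩
    push_neg at hya
    -- projection along a with respect to the functional y
    set proj : (Fin n → ℚ) → (Fin n → ℚ) := fun v => v - ((y ⬝ᵥ v) / (y ⬝ᵥ a)) • a with hproj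
    have key : ∀ (l' : List (Fin n → ℚ)), (∀ a' ∈ l', y ⬝ᵥ a' ≤ 0) → ∀ (v : Fin n → ℚ),
        InCone (l'.map proj) v → ∃ t : ℚ, t ≤ 0 ∧ InCone l' (v + t • a) := by
      intro l'
      induction l' with
      | nil => intro _ v hv; exact ⟨0, le_refl 0, by simpa [InCone] using hv⟩
      | cons a' l' ih' =>
        intro hneg v hv
        obtain ⟨μ, hμ, hv⟩ := hv
        obtain ⟨t, ht, h⟩ := ih' (fun x hx => hneg x (List.mem_cons_of_mem _ hx)) _ hv
        refine ⟨t + μ * ((y ⬝ᵥ a') / (y ⬝ᵥ a)), ?_, ?_⟩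
        · have h1 : (y ⬝ᵥ a') / (y ⬝ᵥ a) ≤ 0 :=
            div_nonpos_of_nonpos_of_nonneg (hneg a' (List.mem_cons_self)) hya.le
          have := mul_nonpos_of_nonneg_of_nonpos hμ h1
          linarith
        · refine ⟨μ, hμ, incone_congr h ?_⟩
          rw [hproj]
          module
    rcases ih (l.map proj) (proj b) (by simpa using hm) with h | ⟨z, hz, hzb⟩
    · -- b is in the cone
      obtain ⟨t, ht, h⟩ := key l hy _ h
      left
      refine ⟨(y ⬝ᵥ b) / (y ⬝ᵥ a) - t, ?_, incone_congr h ?_⟩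
      · have : 0 < (y ⬝ᵥ b) / (y ⬝ᵥ a) := div_pos hyb hya
        linarith
      · rw [hproj]
        module
    · -- separating functional
      right
      have hval : ∀ v : Fin n → ℚ,
          (z - ((z ⬝ᵥ a) / (y ⬝ᵥ a)) • y) ⬝ᵥ v = z ⬝ᵥ proj v := by
        intro v
        rw [hproj]
        simp only [sub_dotProduct, smul_dotProduct, dotProduct_sub, dotProduct_smul,
          smul_eq_mul]
        field_simp
      refine ⟨z - ((z ⬝ᵥ a) / (y ⬝ᵥ a)) • y, ?_, ?_⟩
      · intro x hx
        rcases List.mem_cons.1 hx with rfl | hx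
        · rw [hval]
          have : proj x = 0 - 0 • x := by
            rw [hproj]
            field_simp
            simp
          rw [this]
          simp
        · rw [hval]
          exact hz (proj x) (List.mem_map_of_mem hx)
      · rw [hval]
        exact hzb

lemma incone_append {l₁ l₂ : List (Fin n → ℚ)} {b : Fin n → ℚ} (h : InCone (l₁ ++ l₂) b) :
    ∃ c : Fin n → ℚ, InCone l₁ c ∧ InCone l₂ (b - c) := by
  induction l₁ generalizing b with
  | nil => exact ⟨0, rfl, by simpa using h⟩
  | cons a l₁ ih =>
    obtain ⟨μ, hμ, h⟩ := h
    obtain ⟨c, hc1, hc2⟩ := ih h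
    refine ⟨c + μ • a, ⟨μ, hμ, by simpa using hc1⟩, incone_congr hc2 (by module)⟩

lemma incone_mem_span {l : List (Fin n → ℚ)} {b : Fin n → ℚ} (h : InCone l b) :
    b ∈ Submodule.span ℚ {x | x ∈ l} := by
  induction l generalizing b with
  | nil => simp [show b = 0 from h]
  | cons a l ih =>
    obtain ⟨μ, hμ, h⟩ := h
    have h1 : b - μ • a ∈ Submodule.span ℚ {x | x ∈ l} := ih h
    have h2 : b = (b - μ • a) + μ • a := by module
    rw [h2]
    refine Submodule.add_mem _ (Submodule.span_mono ?_ h1)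
      (Submodule.smul_mem _ _ (Submodule.subset_span (by simp)))
    exact fun x hx => List.mem_cons_of_mem _ hx

lemma incone_nonpos {l : List (Fin n → ℚ)} (hl : ∀ a ∈ l, ∀ i, a i ≤ 0) {b : Fin n → ℚ}
    (h : InCone l b) : ∀ i, b i ≤ 0 := by
  induction l generalizing b with
  | nil => intro i; simp [show b = 0 from h]
  | cons a l ih =>
    obtain ⟨μ, hμ, h⟩ := h
    intro i
    have h1 := ih (fun x hx => hl x (List.mem_cons_of_mem _ hx)) h i
    have h2 : μ * a i ≤ 0 := mul_nonpos_of_nonneg_of_nonpos hμ (hl a (List.mem_cons_self) i)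
    simp only [Pi.sub_apply, Pi.smul_apply, smul_eq_mul] at h1
    linarith

lemma ratclear (q : ℚ) (N : ℕ) (h : q.den ∣ N) : ∃ z : ℤ, (z : ℚ) = N * q := by
  obtain ⟨k, hk⟩ := h
  refine ⟨q.num * k, ?_⟩
  have hden : (q.den : ℚ) ≠ 0 := Nat.cast_ne_zero.2 q.den_nz
  have hnum : (q.num : ℚ) = q * q.den := by
    rw [mul_comm]
    exact_mod_cast (Rat.den_mul_eq_num q).symm
  push_cast
  rw [hnum, hk]
  push_cast
  ring

lemma stiemke (D : AddSubgroup (Fin n → ℤ))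
    (hD : ∀ x ∈ D, (∀ i, 0 ≤ x i) → x = 0) :
    ∃ m : Fin n → ℕ, (∀ i, 0 < m i) ∧ ∀ x ∈ D, ∑ i, (m i : ℤ) * x i = 0 := by
  classical
  set c : (Fin n → ℤ) → (Fin n → ℚ) := fun x i => (x i : ℚ) with hc
  set V : Submodule ℚ (Fin n → ℚ) := Submodule.span ℚ (c '' ↑D) with hVdef
  -- no nonzero nonnegative vector in V
  have hV : ∀ v ∈ V, (∀ i, 0 ≤ v i) → v = 0 := by
    intro v hv hvpos
    rw [hVdef, Submodule.mem_span_set'] at hv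
    obtain ⟨k, f, g, hfg⟩ := hv
    have hg : ∀ i : Fin k, ∃ d ∈ D, c d = (g i : Fin n → ℚ) := by
      intro i
      obtain ⟨d, hd, hcd⟩ := (g i).2
      exact ⟨d, hd, hcd⟩
    choose d hdD hdc using hg
    set N : ℕ := ∏ i : Fin k, (f i).den with hN
    have hNpos : 0 < N := Finset.prod_pos fun i _ => (f i).pos
    have hdvd : ∀ i : Fin k, (f i).den ∣ N := fun i =>
      Finset.dvd_prod_of_mem _ (Finset.mem_univ i)
    choose z hz using fun i : Fin k => ratclear (f i) N (hdvd i)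
    set d0 : Fin n → ℤ := ∑ i : Fin k, z i • d i with hd0
    have hd0D : d0 ∈ D := AddSubgroup.sum_mem _ fun i _ => AddSubgroup.zsmul_mem _ (hdD i) _
    have hcast : ∀ j, (d0 j : ℚ) = (N : ℚ) * v j := by
      intro j
      have : d0 j = ∑ i : Fin k, z i * d i j := by
        rw [hd0]; simp [Finset.sum_apply]
      rw [this]
      push_cast
      have : ∀ i : Fin k, (z i : ℚ) * (d i j : ℚ) = (N : ℚ) * (f i * (g i : Fin n → ℚ) j) := by
        intro i
        have h1 : ((d i) j : ℚ) = (g i : Fin n → ℚ) j := congr_fun (hdc i) j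
        rw [h1, hz i]; ring
      rw [Finset.sum_congr rfl fun i _ => this i, ← Finset.mul_sum]
      congr 1
      have := congr_fun hfg j
      simpa [Finset.sum_apply] using this
    have hd0nn : ∀ j, 0 ≤ d0 j := by
      intro j
      have : (0 : ℚ) ≤ (d0 j : ℚ) := by
        rw [hcast j]
        exact mul_nonneg (by positivity) (hvpos j)
      exact_mod_cast this
    have hd00 : d0 = 0 := hD d0 hd0D hd0nn
    funext j
    have : (N : ℚ) * v j = 0 := by
      rw [← hcast j, hd00]; simp
    have hN0 : (N : ℚ) ≠ 0 := by positivity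
    simpa [hN0] using this
  -- V is finitely generated
  obtain ⟨T, hT⟩ : V.FG := IsNoetherian.noetherian V
  have hTV : ∀ t ∈ T, t ∈ V := fun t ht => hT ▸ Submodule.subset_span ht
  -- for each coordinate, a nonnegative functional vanishing on V and positive there
  have key : ∀ j : Fin n, ∃ y : Fin n → ℚ,
      (∀ i, 0 ≤ y i) ∧ 0 < y j ∧ ∀ v ∈ V, y ⬝ᵥ v = 0 := by
    intro j
    set l : List (Fin n → ℚ) := T.toList with hl
    set A : List (Fin n → ℚ) :=
      l ++ (l.map (fun t => -t) ++ List.ofFn fun i : Fin n => -Pi.single i 1) with hA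
    rcases farkas A (Pi.single j 1) with h | ⟨y, hy, hyb⟩
    · exfalso
      obtain ⟨c₁, hc₁, h⟩ := incone_append h
      obtain ⟨c₂, hc₂, h⟩ := incone_append h
      have hc₁V : c₁ ∈ V := by
        refine Submodule.span_le.2 ?_ (incone_mem_span hc₁)
        intro x hx
        exact hTV x (Finset.mem_toList.1 hx)
      have hc₂V : c₂ ∈ V := by
        refine Submodule.span_le.2 ?_ (incone_mem_span hc₂)
        rintro x hx
        obtain ⟨t, ht, rfl⟩ := List.mem_map.1 hx
        exact neg_mem (hTV t (Finset.mem_toList.1 ht))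
      have hnonpos : ∀ i, (Pi.single j 1 - c₁ - c₂ : Fin n → ℚ) i ≤ 0 := by
        refine incone_nonpos ?_ h
        intro a ha i
        obtain ⟨i', rfl⟩ := List.mem_ofFn.1 ha
        by_cases hii : i = i' <;> simp [Pi.single_apply, hii]
      have hvV : c₁ + c₂ ∈ V := Submodule.add_mem _ hc₁V hc₂V
      have hvnn : ∀ i, 0 ≤ (c₁ + c₂ : Fin n → ℚ) i := by
        intro i
        have h1 := hnonpos i
        have h2 : (0:ℚ) ≤ (Pi.single j 1 : Fin n → ℚ) i := by
          by_cases hii : i = j <;> simp [Pi.single_apply, hii]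
        simp only [Pi.sub_apply, Pi.add_apply] at h1 ⊢
        linarith
      have heq := hV _ hvV hvnn
      have h1 := hnonpos j
      have h2 := congr_fun heq j
      simp only [Pi.add_apply, Pi.zero_apply] at h2
      simp only [Pi.sub_apply, Pi.single_eq_same] at h1
      linarith
    · have hmem : ∀ a, a ∈ A ↔ a ∈ l ∨ a ∈ l.map (fun t => -t) ∨
          a ∈ (List.ofFn fun i : Fin n => -Pi.single i 1) := by
        intro a; rw [hA]; simp [List.mem_append, or_assoc]
      have hynn : ∀ i, 0 ≤ y i := by
        intro i
        have : y ⬝ᵥ (-Pi.single i 1) ≤ 0 := by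
          refine hy _ ?_
          rw [hmem]
          exact Or.inr (Or.inr (List.mem_ofFn.2 ⟨i, rfl⟩))
        rw [dotProduct_neg, dotProduct_single] at this
        linarith
      have hyT : ∀ t ∈ T, y ⬝ᵥ t = 0 := by
        intro t ht
        have h1 : y ⬝ᵥ t ≤ 0 := hy t ((hmem t).2 (Or.inl (Finset.mem_toList.2 ht)))
        have h2 : y ⬝ᵥ (-t) ≤ 0 := by
          refine hy _ ((hmem _).2 (Or.inr (Or.inl ?_)))
          exact List.mem_map.2 ⟨t, Finset.mem_toList.2 ht, rfl⟩
        rw [dotProduct_neg] at h2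
        linarith
      refine ⟨y, hynn, by simpa [dotProduct_single] using hyb, ?_⟩
      intro v hv
      rw [← hT] at hv
      induction hv using Submodule.span_induction with
      | mem x hx => exact hyT x hx
      | zero => exact dotProduct_zero y
      | add x x' _ _ hx hx' => rw [dotProduct_add, hx, hx', add_zero]
      | smul a x _ hx => rw [dotProduct_smul, hx, smul_zero]
  choose y hy1 hy2 hy3 using key
  set w : Fin n → ℚ := ∑ j : Fin n, y j with hw
  have hwpos : ∀ i, 0 < w i := by
    intro i
    rw [hw, Finset.sum_apply]
    exact Finset.sum_pos' (fun j _ => hy1 j i) ⟨i, Finset.mem_univ i, hy2 i⟩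
  have hwV : ∀ v ∈ V, w ⬝ᵥ v = 0 := by
    intro v hv
    rw [hw]
    have : (∑ j : Fin n, y j) ⬝ᵥ v = ∑ j : Fin n, y j ⬝ᵥ v := by
      simp [dotProduct, Finset.sum_apply, Finset.sum_mul]
      rw [Finset.sum_comm]
    rw [this]
    exact Finset.sum_eq_zero fun j _ => hy3 j v hv
  -- clear denominators
  set N : ℕ := ∏ i : Fin n, (w i).den with hN
  have hNpos : 0 < N := Finset.prod_pos fun i _ => (w i).pos
  choose z hz using fun i : Fin n =>
    ratclear (w i) N (Finset.dvd_prod_of_mem _ (Finset.mem_univ i))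
  have hzpos : ∀ i, 0 < z i := by
    intro i
    have : (0:ℚ) < (z i : ℚ) := by
      rw [hz i]
      exact mul_pos (by exact_mod_cast hNpos) (hwpos i)
    exact_mod_cast this
  refine ⟨fun i => (z i).toNat, fun i => by simp [Int.lt_toNat.2 (hzpos i)], ?_⟩
  intro x hx
  have hxV : c x ∈ V := Submodule.subset_span ⟨x, hx, rfl⟩
  have h0 := hwV _ hxV
  have h1 : (N : ℚ) * (w ⬝ᵥ c x) = ∑ i, (z i : ℚ) * (x i : ℚ) := by
    rw [dotProduct, Finset.mul_sum]
    refine Finset.sum_congr rfl fun i _ => ?_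
    rw [hz i]
    simp only [hc]
    ring
  rw [h0, mul_zero] at h1
  have h2 : ((∑ i, z i * x i : ℤ) : ℚ) = 0 := by
    push_cast
    exact h1.symm
  have h3 : (∑ i, z i * x i : ℤ) = 0 := by exact_mod_cast h2
  rw [← h3]
  refine Finset.sum_congr rfl fun i _ => ?_
  congr 1
  exact Int.toNat_of_nonneg (hzpos i).le

/-- Every fine sharp commutative monoid `Q` (finitely generated,
cancellative, with `0` the only unit) admits a monoid homomorphism `u : Q → ℕ` with
`u q > 0` for all `q ≠ 0`. -/
theorem stmt13 (Q : Type*) [AddCancelCommMonoid Q] [AddMonoid.FG Q]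
    (hQ : ∀ a b : Q, a + b = 0 → a = 0) :
    ∃ u : Q →+ ℕ, ∀ q : Q, q ≠ 0 → 0 < u q := by
  classical
  -- a finite set of nonzero generators
  obtain ⟨S, hS⟩ := (AddMonoid.fg_def).1 ‹_›
  set S' : Finset Q := S.erase 0 with hS'
  have hclos : AddSubmonoid.closure (↑S' : Set Q) = ⊤ := by
    rw [eq_top_iff, ← hS]
    refine AddSubmonoid.closure_le.2 ?_
    intro x hx
    by_cases hx0 : x = 0
    · subst hx0; exact AddSubmonoid.zero_mem _
    · exact AddSubmonoid.subset_closure (Finset.mem_erase.2 ⟨hx0, hx⟩)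
  set n : ℕ := S'.card with hn
  set g : Fin n → Q := fun i => (S'.equivFin.symm i : Q) with hg
  have hgS' : ∀ i, g i ∈ S' := fun i => (S'.equivFin.symm i).2
  have hgne : ∀ i, g i ≠ 0 := fun i => (Finset.mem_erase.1 (hgS' i)).1
  have hgsurj : ∀ x ∈ S', ∃ i, g i = x := by
    intro x hx
    exact ⟨S'.equivFin ⟨x, hx⟩, by simp [hg]⟩
  -- the presentation map
  set π : (Fin n → ℕ) → Q := fun a => ∑ i, a i • g i with hπ
  have hπ0 : π 0 = 0 := by simp [hπ]
  have hπadd : ∀ a b, π (a + b) = π a + π b := by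
    intro a b
    simp only [hπ, Pi.add_apply, add_nsmul]
    rw [Finset.sum_add_distrib]
  have hπsurj : ∀ q : Q, ∃ a, π a = q := by
    intro q
    have hq : q ∈ AddSubmonoid.closure (↑S' : Set Q) := hclos ▸ AddSubmonoid.mem_top q
    induction hq using AddSubmonoid.closure_induction with
    | mem x hx =>
      obtain ⟨i, rfl⟩ := hgsurj x hx
      refine ⟨Pi.single i 1, ?_⟩
      simp only [hπ]
      rw [Finset.sum_eq_single_of_mem i (Finset.mem_univ i)]
      · simp
      · intro j _ hj
        simp [Pi.single_apply, hj]
    | zero => exact ⟨0, hπ0⟩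
    | add x y _ _ hx hy =>
      obtain ⟨a, ha⟩ := hx
      obtain ⟨b, hb⟩ := hy
      exact ⟨a + b, by rw [hπadd, ha, hb]⟩
  -- sharpness for finite sums
  have hsum : ∀ (s : Finset (Fin n)) (f : Fin n → Q), ∑ i ∈ s, f i = 0 → ∀ i ∈ s, f i = 0 := by
    intro s
    induction s using Finset.cons_induction with
    | empty => intro f _ i hi; simp at hi
    | cons a s ha ih =>
      intro f hf i hi
      rw [Finset.sum_cons] at hf
      have hfa : f a = 0 := hQ _ _ hf
      have hrest : ∑ j ∈ s, f j = 0 := by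
        rw [add_comm] at hf
        have := hQ _ _ hf
        exact this
      rcases Finset.mem_cons.1 hi with rfl | hi
      · exact hfa
      · exact ih f hrest i hi
  have hπzero : ∀ a, π a = 0 → a = 0 := by
    intro a ha
    funext i
    rw [Pi.zero_apply]
    by_contra hii
    have h1 : a i • g i = 0 := hsum Finset.univ _ ha i (Finset.mem_univ i)
    obtain ⟨k, hk⟩ : ∃ k, a i = k + 1 := ⟨a i - 1, by omega⟩
    rw [hk, add_nsmul, one_nsmul, add_comm] at h1
    exact hgne i (hQ _ _ h1)
  -- positive and negative parts
  set pos : (Fin n → ℤ) → (Fin n → ℕ) := fun x i => (x i).toNat with hpos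
  -- the relation subgroup
  set D : AddSubgroup (Fin n → ℤ) :=
    { carrier := {x | π (pos x) = π (pos (-x))}
      zero_mem' := by simp [hpos]
      add_mem' := by
        intro x y hx hy
        simp only [Set.mem_setOf_eq] at hx hy ⊢
        have hkey : pos (x + y) + pos (-x) + pos (-y) = pos (-(x+y)) + pos x + pos y := by
          funext i
          simp only [hpos, Pi.add_apply, Pi.neg_apply]
          omega
        have := congrArg π hkey
        rw [hπadd, hπadd, hπadd, hπadd, hx, hy] at this
        -- this : π (pos (x+y)) + π (pos (-x)) + π (pos (-y)) = π (pos (-(x+y))) + π (pos (-x)) + π (pos (-y))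
        have h2 : π (pos (x + y)) + (π (pos (-x)) + π (pos (-y)))
            = π (pos (-(x+y))) + (π (pos (-x)) + π (pos (-y))) := by
          rw [← add_assoc, ← add_assoc]
          exact this
        exact add_right_cancel h2
      neg_mem' := by
        intro x hx
        simp only [Set.mem_setOf_eq] at hx ⊢
        rw [neg_neg]
        exact hx.symm } with hD
  have hDsharp : ∀ x ∈ D, (∀ i, 0 ≤ x i) → x = 0 := by
    intro x hx hxnn
    have h1 : pos (-x) = 0 := by
      funext i
      simp only [hpos, Pi.neg_apply, Pi.zero_apply]
      have := hxnn i
      omega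
    have h2 : π (pos x) = 0 := by
      have : π (pos x) = π (pos (-x)) := hx
      rw [this, h1, hπ0]
    have h3 := hπzero _ h2
    funext i
    have h4 : (x i).toNat = 0 := congr_fun h3 i
    have := hxnn i
    simp only [Pi.zero_apply]
    omega
  obtain ⟨m, hmpos, hmperp⟩ := stiemke D hDsharp
  -- equal values on fibers of π
  have hfiber : ∀ a b : Fin n → ℕ, π a = π b → ∑ i, m i * a i = ∑ i, m i * b i := by
    intro a b hab
    set x : Fin n → ℤ := fun i => (a i : ℤ) - b i with hx
    have hxD : x ∈ D := by
      show π (pos x) = π (pos (-x))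
      have hkey : pos x + b = pos (-x) + a := by
        funext i
        simp only [hpos, hx, Pi.add_apply, Pi.neg_apply]
        omega
      have := congrArg π hkey
      rw [hπadd, hπadd, hab] at this
      exact add_right_cancel this
    have h1 := hmperp x hxD
    have h2 : (∑ i, m i * a i : ℤ) = (∑ i, m i * b i : ℤ) := by
      have : (∑ i, (m i : ℤ) * x i) = (∑ i, (m i :ℤ) * a i) - ∑ i, (m i :ℤ) * b i := by
        rw [← Finset.sum_sub_distrib]
        refine Finset.sum_congr rfl fun i _ => ?_
        rw [hx]
        ring
      rw [this] at h1
      have := sub_eq_zero.1 h1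
      exact_mod_cast this
    exact_mod_cast h2
  -- the homomorphism
  choose sec hsec using hπsurj
  set f : Q → ℕ := fun q => ∑ i, m i * sec q i with hf
  have hf0 : f 0 = 0 := by
    have : sec 0 = 0 := hπzero _ (hsec 0)
    simp [hf, this]
  have hfadd : ∀ q q', f (q + q') = f q + f q' := by
    intro q q'
    have h1 : π (sec (q + q')) = π (sec q + sec q') := by
      rw [hπadd, hsec, hsec, hsec]
    have h2 := hfiber _ _ h1
    rw [hf]
    simp only []
    rw [h2]
    rw [← Finset.sum_add_distrib]
    refine Finset.sum_congr rfl fun i _ => ?_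
    simp [Pi.add_apply, Nat.mul_add]
  refine ⟨⟨⟨f, hf0⟩, fun a b => hfadd a b⟩, ?_⟩
  intro q hq
  have hsq : sec q ≠ 0 := by
    intro h0
    exact hq (by rw [← hsec q, h0, hπ0])
  obtain ⟨i, hi⟩ : ∃ i, sec q i ≠ 0 := by
    by_contra h
    push_neg at h
    exact hsq (funext h)
  show 0 < f q
  refine Finset.sum_pos' (fun j _ => Nat.zero_le _) ⟨i, Finset.mem_univ i, ?_⟩
  exact Nat.mul_pos (hmpos i) (Nat.pos_of_ne_zero hi)
end
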